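/- arXiv:math/9910089 — 6 statements merged into one kernel-verified Lean document; each statement's English description precedes it below -/
import Mathlib

section
/- Let g ∈ L¹([0,a]) and suppose that ∫₀ᵃ g(y) e^{-xy} dy = O(e^{-xa}) as x → ∞. Then g(y) = 0 for a.e. y ∈ [0,a]. -/
/-!
Multiplying the finite Laplace transform `F(z) = ∫₀ᵃ g(y) e^{-zy} dy` by `e^{az}` gives the entire
function `Ψ(z) = ∫₀ᵃ g(y) e^{z(a-y)} dy`, with `|Ψ(z)| ≤ ‖g‖₁ e^{a max(Re z, 0)}`. It is bounded by
`‖g‖₁` on the imaginary axis and, by hypothesis, bounded on the positive real axis, so by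
Phragmén–Lindelöf it is bounded in the right half-plane, hence everywhere. By Liouville `Ψ` is
constant, and the constant is `lim_{x → -∞} Ψ(x) = 0` by dominated convergence. In particular the
Fourier transform of `g · 1_{[0,a]}` vanishes, so the finite measures with densities `g⁺` and `g⁻`
have the same characteristic function, hence coincide, and `g = 0` a.e.
-/

open MeasureTheory Complex Set Filter Topology

theorem ENNReal.ofReal_eq_ofReal_neg_iff {r : ℝ} :
    ENNReal.ofReal r = ENNReal.ofReal (-r) ↔ r = 0 := by
  refine ⟨fun h => ?_, fun h => by simp [h]⟩
  rcases le_total r 0 with hr | hr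
  · rw [ENNReal.ofReal_of_nonpos hr, eq_comm, ENNReal.ofReal_eq_zero] at h
    linarith
  · rw [ENNReal.ofReal_of_nonpos (neg_nonpos.2 hr), ENNReal.ofReal_eq_zero] at h
    linarith

namespace MeasureTheory

variable {E : Type*} [NormedAddCommGroup E] [InnerProductSpace ℝ E] [MeasurableSpace E]
  {μ : Measure E} {f : E → ℝ}

lemma charFun_withDensity_ofReal (hf : AEMeasurable f μ) (t : E) :
    charFun (μ.withDensity fun x => ENNReal.ofReal (f x)) t
      = ∫ x, (max (f x) 0 : ℝ) * cexp (inner ℝ x t * I) ∂μ := by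
  rw [charFun_apply, integral_withDensity_eq_integral_toReal_smul₀ hf.ennreal_ofReal
    (.of_forall fun _ => ENNReal.ofReal_lt_top)]
  simp [ENNReal.toReal_ofReal', Complex.real_smul]

variable [CompleteSpace E] [SecondCountableTopology E] [BorelSpace E]

theorem Integrable.ae_eq_zero_of_forall_integral_mul_char_eq_zero (hf : Integrable f μ)
    (h : ∀ t : E, ∫ x, f x * cexp (inner ℝ x t * I) ∂μ = 0) : f =ᵐ[μ] 0 := by
  have := isFiniteMeasure_withDensity_ofReal hf.2
  have := isFiniteMeasure_withDensity_ofReal hf.neg.2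
  have hchar : charFun (μ.withDensity fun x => ENNReal.ofReal (f x))
      = charFun (μ.withDensity fun x => ENNReal.ofReal ((-f) x)) := by
    ext t
    have hintegrable {u : E → ℝ} (hu : Integrable u μ) :
        Integrable (fun x => (u x : ℂ) * cexp (inner ℝ x t * I)) μ :=
      hu.ofReal.mul_bdd (by fun_prop) (.of_forall fun x => (Complex.norm_exp_ofReal_mul_I _).le)
    rw [charFun_withDensity_ofReal hf.1.aemeasurable,
      charFun_withDensity_ofReal hf.neg.1.aemeasurable, ← sub_eq_zero,
      ← integral_sub (hintegrable hf.pos_part) (hintegrable hf.neg.pos_part), ← h t]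
    congr 1 with x
    rcases le_total (f x) 0 with hx | hx <;> simp [hx]
  have hdensity := Measure.ext_of_charFun hchar
  rw [withDensity_eq_iff hf.1.aemeasurable.ennreal_ofReal hf.neg.1.aemeasurable.ennreal_ofReal
    ((lintegral_ofReal_le_lintegral_enorm f).trans_lt hf.2).ne] at hdensity
  filter_upwards [hdensity] with x hx
  exact ENNReal.ofReal_eq_ofReal_neg_iff.1 hx

end MeasureTheory

noncomputable def finiteLaplace (a : ℝ) (g : ℝ → ℝ) (z : ℂ) : ℂ :=
  ∫ y in Icc 0 a, g y * cexp (-(z * y))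

section

variable {a : ℝ} {g : ℝ → ℝ}

lemma norm_cexp_neg_mul_le {y : ℝ} (hy : y ∈ Icc 0 a) (z : ℂ) :
    ‖cexp (-(z * y))‖ ≤ Real.exp (a * max (-z.re) 0) := by
  rw [Complex.norm_exp, Real.exp_le_exp]
  have h1 : -z.re * y ≤ max (-z.re) 0 * y := mul_le_mul_of_nonneg_right (le_max_left _ _) hy.1
  have h2 : max (-z.re) 0 * y ≤ max (-z.re) 0 * a :=
    mul_le_mul_of_nonneg_left hy.2 (le_max_right _ _)
  simp only [neg_re, mul_re, ofReal_re, ofReal_im, mul_zero, sub_zero]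
  linarith

lemma integrableOn_mul_cexp_neg_mul (hg : IntegrableOn g (Icc 0 a)) (z : ℂ) :
    IntegrableOn (fun y => (g y : ℂ) * cexp (-(z * y))) (Icc 0 a) :=
  hg.ofReal.mul_bdd (by fun_prop)
    ((ae_restrict_mem measurableSet_Icc).mono fun _ hy => norm_cexp_neg_mul_le hy z)

lemma norm_finiteLaplace_le (hg : IntegrableOn g (Icc 0 a)) (z : ℂ) :
    ‖finiteLaplace a g z‖ ≤ (∫ y in Icc 0 a, |g y|) * Real.exp (a * max (-z.re) 0) := by
  rw [← integral_mul_const]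
  refine norm_integral_le_of_norm_le (hg.norm.mul_const _) ?_
  filter_upwards [ae_restrict_mem measurableSet_Icc] with y hy
  rw [norm_mul, norm_real, Real.norm_eq_abs]
  exact mul_le_mul_of_nonneg_left (norm_cexp_neg_mul_le hy z) (abs_nonneg _)

lemma differentiable_finiteLaplace (hg : IntegrableOn g (Icc 0 a)) :
    Differentiable ℂ (finiteLaplace a g) := by
  intro z₀
  have hF' : ∀ y : ℝ, ∀ z : ℂ, HasDerivAt (fun z => (g y : ℂ) * cexp (-(z * y)))
      (g y * (cexp (-(z * y)) * -y)) z := fun y z => by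
    simpa using (((hasDerivAt_id z).mul_const (y : ℂ)).neg.cexp).const_mul (g y : ℂ)
  refine (hasDerivAt_integral_of_dominated_loc_of_deriv_le (Metric.ball_mem_nhds z₀ one_pos)
    (.of_forall fun z => (integrableOn_mul_cexp_neg_mul hg z).aestronglyMeasurable)
    (integrableOn_mul_cexp_neg_mul hg z₀) ?_ ?_
    (hg.norm.mul_const (Real.exp (a * (‖z₀‖ + 1)) * a))
    (.of_forall fun y z _ => hF' y z)).2.differentiableAt
  · exact hg.ofReal.aestronglyMeasurable.mul (by fun_prop)
  · filter_upwards [ae_restrict_mem measurableSet_Icc] with y hy z hz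
    have ha : 0 ≤ a := hy.1.trans hy.2
    have hre : max (-z.re) 0 ≤ ‖z₀‖ + 1 := by
      refine max_le ?_ (by positivity)
      have := mem_ball_iff_norm.1 hz
      linarith [neg_re z ▸ re_le_norm (-z), norm_neg z, norm_le_norm_add_norm_sub' z z₀]
    rw [norm_mul, norm_mul, norm_real, norm_neg, norm_real, Real.norm_eq_abs, Real.norm_eq_abs,
      abs_of_nonneg hy.1]
    have hexp := (norm_cexp_neg_mul_le hy z).trans
      (Real.exp_le_exp.2 (mul_le_mul_of_nonneg_left hre ha))
    gcongr
    exacts [hy.1, hy.2]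

lemma exp_mul_finiteLaplace (z : ℂ) :
    cexp (a * z) * finiteLaplace a g z = ∫ y in Icc 0 a, g y * cexp (z * (a - y)) := by
  rw [finiteLaplace, ← integral_const_mul]
  congr 1 with y
  rw [mul_left_comm, ← Complex.exp_add]
  ring_nf

lemma norm_exp_mul_finiteLaplace_le (hg : IntegrableOn g (Icc 0 a)) (z : ℂ) :
    ‖cexp (a * z) * finiteLaplace a g z‖
      ≤ (∫ y in Icc 0 a, |g y|) * Real.exp (a * max z.re 0) := by
  have hmax : a * z.re + a * max (-z.re) 0 = a * max z.re 0 := by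
    rcases le_total z.re 0 with h | h <;> simp [h]
  calc ‖cexp (a * z) * finiteLaplace a g z‖
      ≤ Real.exp (a * z.re) * ((∫ y in Icc 0 a, |g y|) * Real.exp (a * max (-z.re) 0)) := by
        rw [norm_mul, Complex.norm_exp, re_ofReal_mul]
        gcongr
        exact norm_finiteLaplace_le hg z
    _ = (∫ y in Icc 0 a, |g y|) * Real.exp (a * max z.re 0) := by
        rw [mul_left_comm, ← Real.exp_add, hmax]

lemma norm_exp_mul_finiteLaplace_le_of_isBoundedUnder (hg : IntegrableOn g (Icc 0 a))
    (hbdd : IsBoundedUnder (· ≤ ·) atTop fun x : ℝ => ‖cexp (a * x) * finiteLaplace a g x‖)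
    (z : ℂ) : ‖cexp (a * z) * finiteLaplace a g z‖ ≤ ∫ y in Icc 0 a, |g y| := by
  have hle (w : ℂ) (hw : w.re ≤ 0) :
      ‖cexp (a * w) * finiteLaplace a g w‖ ≤ ∫ y in Icc 0 a, |g y| := by
    simpa [hw] using norm_exp_mul_finiteLaplace_le hg w
  rcases le_or_gt z.re 0 with hz | hz
  · exact hle z hz
  have hgrowth : ∀ w : ℂ, ‖cexp (a * w) * finiteLaplace a g w‖
      ≤ (∫ y in Icc 0 a, |g y|) * ‖Real.exp (|a| * ‖w‖ ^ (1 : ℝ))‖ := fun w => by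
    refine (norm_exp_mul_finiteLaplace_le hg w).trans ?_
    rw [Real.rpow_one, Real.norm_of_nonneg (Real.exp_pos _).le]
    refine mul_le_mul_of_nonneg_left (Real.exp_le_exp.2 ?_)
      (setIntegral_nonneg measurableSet_Icc fun y _ => abs_nonneg _)
    exact (mul_le_mul_of_nonneg_right (le_abs_self a) (le_max_right _ _)).trans
        (mul_le_mul_of_nonneg_left (max_le (re_le_norm w) (norm_nonneg w)) (abs_nonneg a))
  refine PhragmenLindelof.right_half_plane_of_bounded_on_real
    (f := fun w => cexp (a * w) * finiteLaplace a g w)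
    ((differentiable_exp.comp (differentiable_id.const_mul _)).mul
      (differentiable_finiteLaplace hg)).diffContOnCl
    ⟨1, one_lt_two, |a|, .of_bound _ (.of_forall hgrowth)⟩ hbdd (fun x => hle _ (by simp)) hz.le

lemma tendsto_exp_mul_finiteLaplace_atBot (hg : IntegrableOn g (Icc 0 a)) :
    Tendsto (fun x : ℝ => cexp (a * x) * finiteLaplace a g x) atBot (𝓝 0) := by
  simp_rw [exp_mul_finiteLaplace]
  rw [← integral_zero ℝ ℂ]
  refine tendsto_integral_filter_of_dominated_convergence (fun y => |g y|)
    (.of_forall fun x => hg.ofReal.aestronglyMeasurable.mul (by fun_prop)) ?_ hg.norm ?_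
  · filter_upwards [eventually_le_atBot 0] with x hx
    filter_upwards [ae_restrict_mem measurableSet_Icc] with y hy
    rw [norm_mul, norm_real, Real.norm_eq_abs, ← ofReal_sub, ← ofReal_mul, norm_exp_ofReal]
    exact mul_le_of_le_one_right (abs_nonneg _)
      (Real.exp_le_one_iff.2 (mul_nonpos_of_nonpos_of_nonneg hx (sub_nonneg.2 hy.2)))
  · filter_upwards [ae_restrict_mem measurableSet_Icc, Measure.ae_ne _ a] with y hy hya
    have hpos : 0 < a - y := sub_pos.2 (lt_of_le_of_ne hy.2 hya)
    simpa using ((Real.tendsto_exp_atBot.comp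
      (tendsto_id.atBot_mul_const hpos)).ofReal.const_mul (g y : ℂ))

lemma finiteLaplace_eq_zero_of_isBoundedUnder (hg : IntegrableOn g (Icc 0 a))
    (hbdd : IsBoundedUnder (· ≤ ·) atTop fun x : ℝ => ‖cexp (a * x) * finiteLaplace a g x‖) :
    finiteLaplace a g = 0 := by
  set Ψ : ℂ → ℂ := fun z => cexp (a * z) * finiteLaplace a g z
  have hΨ : Differentiable ℂ Ψ :=
    (differentiable_exp.comp (differentiable_id.const_mul _)).mul (differentiable_finiteLaplace hg)
  have hconst : ∀ z w, Ψ z = Ψ w := hΨ.apply_eq_apply_of_bounded <|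
    isBounded_iff_forall_norm_le.2 ⟨_, forall_mem_range.2
      (norm_exp_mul_finiteLaplace_le_of_isBoundedUnder hg hbdd)⟩
  funext z
  have hΨz : Ψ z = 0 := tendsto_nhds_unique
    ((tendsto_const_nhds (x := Ψ z)).congr fun x : ℝ => hconst z x)
    (tendsto_exp_mul_finiteLaplace_atBot hg)
  exact (mul_eq_zero.1 hΨz).resolve_left (Complex.exp_ne_zero _)

lemma ae_eq_zero_of_finiteLaplace_eq_zero (hg : IntegrableOn g (Icc 0 a))
    (h : finiteLaplace a g = 0) : ∀ᵐ y ∂volume.restrict (Icc 0 a), g y = 0 :=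
  Integrable.ae_eq_zero_of_forall_integral_mul_char_eq_zero hg fun t => by
    simpa [finiteLaplace, mul_comm, mul_left_comm] using congrFun h (-(t * I))

lemma finiteLaplace_ofReal (ha : 0 ≤ a) (x : ℝ) :
    finiteLaplace a g x = ↑(∫ y in (0 : ℝ)..a, g y * Real.exp (-x * y)) := by
  rw [← intervalIntegral.integral_ofReal, intervalIntegral.integral_of_le ha,
    ← integral_Icc_eq_integral_Ioc, finiteLaplace]
  congr 1 with y
  push_cast
  ring_nf

end

/-- If `g ∈ L¹([0,a])` and `∫₀ᵃ g(y) e^{-xy} dy = O(e^{-xa})` as `x → ∞`,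
then `g = 0` a.e. on `[0,a]`. -/
theorem finite_laplace_transform_decay_implies_zero
    (a : ℝ) (ha : 0 < a) (g : ℝ → ℝ)
    (hg : IntegrableOn g (Set.Icc 0 a))
    (hO : ∃ C > (0:ℝ), ∃ x₀ : ℝ, ∀ x ≥ x₀,
      |∫ y in (0:ℝ)..a, g y * Real.exp (-x * y)| ≤ C * Real.exp (-x * a)) :
    ∀ᵐ y ∂(volume.restrict (Set.Icc 0 a)), g y = 0 := by
  obtain ⟨C, -, x₀, hC⟩ := hO
  have hbdd : IsBoundedUnder (· ≤ ·) atTop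
      fun x : ℝ => ‖cexp (a * x) * finiteLaplace a g x‖ := by
    refine isBoundedUnder_of_eventually_le (a := C) ?_
    filter_upwards [eventually_ge_atTop x₀] with x hx
    rw [finiteLaplace_ofReal ha.le, ← ofReal_mul, ← ofReal_exp, ← ofReal_mul, norm_real,
      Real.norm_eq_abs, abs_mul, abs_of_pos (Real.exp_pos _)]
    calc Real.exp (a * x) * |∫ y in (0 : ℝ)..a, g y * Real.exp (-x * y)|
        ≤ Real.exp (a * x) * (C * Real.exp (-x * a)) := by gcongr; exact hC x hx
      _ = C := by
        rw [mul_left_comm, ← Real.exp_add, neg_mul, mul_comm x, add_neg_cancel, Real.exp_zero,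
          mul_one]
  exact ae_eq_zero_of_finiteLaplace_eq_zero hg (finiteLaplace_eq_zero_of_isBoundedUnder hg hbdd)
end

section
/- If f₁(z,x) = e^{i√z x} + ∫ₓᵃ K₁(x,y) e^{i√z y} dy and f₂(z,x) = e^{i√z x} + ∫ₓᵃ K₂(x,y) e^{i√z y} dy with continuous kernels K_j supported in {x ≤ y ≤ a}, then the product admits the representation f₁(z,x)f₂(z,x) = e^{2i√z x} + ∫ₓᵃ L(x,y) e^{2i√z y} dy where L(x,y) = 2[K₁(x,2y−x) + K₂(x,2y−x)] + 2∫ₓ^{2y−x} K₁(x,x') K₂(x,2y−x') dx' for x ≤ y and L(x,y) = 0 otherwise. -/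
open MeasureTheory Complex

section Helpers
variable {E : Type*} [NormedAddCommGroup E] [NormedSpace ℝ E]

lemma zero_piece {g : ℝ → E} {p b : ℝ} (hpb : p ≤ b)
    (h0 : ∀ t, p < t → t < b → g t = 0) : ∫ t in p..b, g t = 0 := by
  rw [intervalIntegral.integral_of_le hpb, MeasureTheory.integral_Ioc_eq_integral_Ioo]
  exact MeasureTheory.setIntegral_eq_zero_of_forall_eq_zero fun t ht => h0 t ht.1 ht.2

lemma ext_integral {g : ℝ → E} (hg : Continuous g) {b c p q : ℝ}
    (hpb : p ≤ b) (hbc : b ≤ c) (hcq : c ≤ q)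
    (h0 : ∀ t, t < b ∨ c < t → g t = 0) :
    ∫ t in p..q, g t = ∫ t in b..c, g t := by
  have i1 : IntervalIntegrable g volume p b := hg.intervalIntegrable _ _
  have i2 : IntervalIntegrable g volume b c := hg.intervalIntegrable _ _
  have i3 : IntervalIntegrable g volume c q := hg.intervalIntegrable _ _
  rw [← intervalIntegral.integral_add_adjacent_intervals (i1.trans i2) i3,
      ← intervalIntegral.integral_add_adjacent_intervals i1 i2,
      zero_piece hpb (fun t _ ht => h0 t (Or.inl ht)),
      zero_piece hcq (fun t ht _ => h0 t (Or.inr ht))]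
  abel

end Helpers

lemma fubini_rect {F : ℝ → ℝ → ℂ} (hF : Continuous fun p : ℝ × ℝ => F p.1 p.2)
    {x a : ℝ} (hxa : x ≤ a) :
    ∫ u in x..a, ∫ y in x..a, F u y = ∫ y in x..a, ∫ u in x..a, F u y := by
  simp_rw [intervalIntegral.integral_of_le hxa]
  apply MeasureTheory.integral_integral_swap
  rw [Measure.prod_restrict]
  have : IntegrableOn (Function.uncurry F) (Set.Icc x a ×ˢ Set.Icc x a)
      (volume.prod volume) :=
    hF.continuousOn.integrableOn_compact (isCompact_Icc.prod isCompact_Icc)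
  have h2 := this.mono_set (Set.prod_mono Set.Ioc_subset_Icc_self Set.Ioc_subset_Icc_self)
  rwa [← MeasureTheory.Measure.volume_eq_prod ℝ ℝ] at h2

lemma subA {K : ℝ → ℝ → ℝ} {a : ℝ} (hK : Continuous fun p : ℝ × ℝ => K p.1 p.2)
    (hsupp : ∀ u v : ℝ, (v < u ∨ a < v) → K u v = 0)
    (x c : ℝ) (hxc : x ≤ c) (hca : c ≤ a) (s : ℂ) :
    (∫ v in x..a, (K x v : ℂ) * Complex.exp (I * s * (v + c))) =
      ∫ y in x..a, 2 * (K x (2*y - c) : ℂ) * Complex.exp (2 * I * s * y) := by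
  set g : ℝ → ℂ := fun t => (K x t : ℂ) * Complex.exp (I * s * (t + c)) with hg
  have hKx : Continuous fun t => K x t := hK.comp (Continuous.prodMk_right x)
  have hgc : Continuous g := by
    apply (Complex.continuous_ofReal.comp hKx).mul
    exact Complex.continuous_exp.comp (by fun_prop)
  have key : ∀ y ∈ Set.uIcc x a, 2 * (K x (2*y - c) : ℂ) * Complex.exp (2 * I * s * y)
      = (2:ℝ) • g (2*y - c) := by
    intro y _
    have h2 : (I * s * (((2*y - c : ℝ) : ℂ) + (c:ℝ))) = 2 * I * s * (y:ℝ) := by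
      push_cast; ring
    simp only [hg, h2, real_smul, ofReal_ofNat]
    ring
  rw [intervalIntegral.integral_congr key, intervalIntegral.integral_smul,
    intervalIntegral.integral_comp_mul_sub g two_ne_zero c, smul_smul]
  norm_num
  exact (ext_integral hgc (by linarith) (by linarith) (by linarith)
    (fun t ht => by simp [hg, hsupp x t ht])).symm

/-- subA specialized: `exp(isc) * ∫ K(x,v) exp(isv) dv = ∫ 2 K(x,2y-c) exp(2isy) dy`. -/
lemma subB {K : ℝ → ℝ → ℝ} {a : ℝ} (hK : Continuous fun p : ℝ × ℝ => K p.1 p.2)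
    (hsupp : ∀ u v : ℝ, (v < u ∨ a < v) → K u v = 0)
    (x c : ℝ) (hxc : x ≤ c) (hca : c ≤ a) (s : ℂ) :
    Complex.exp (I * s * c) * (∫ v in x..a, (K x v : ℂ) * Complex.exp (I * s * v)) =
      ∫ y in x..a, 2 * (K x (2*y - c) : ℂ) * Complex.exp (2 * I * s * y) := by
  rw [← intervalIntegral.integral_const_mul]
  rw [intervalIntegral.integral_congr
    (g := fun v : ℝ => (K x v : ℂ) * Complex.exp (I * s * (v + c)))]
  · exact subA hK hsupp x c hxc hca s
  · intro v _
    have h : (I * s * ((v:ℂ) + (c:ℂ))) = I * s * v + I * s * c := by ring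
    simp only
    rw [show ((v:ℝ) + c : ℂ) = (v:ℂ) + (c:ℂ) by push_cast; ring, h, Complex.exp_add]
    ring

/-- Product representation: if `f_j(z,x) = e^{i√z x} + ∫ₓᵃ K_j(x,y) e^{i√z y} dy`
with continuous kernels supported in `{x ≤ y ≤ a}`, then
`f₁ f₂ = e^{2i√z x} + ∫ₓᵃ L(x,y) e^{2i√z y} dy`, where
`L(x,y) = 2[K₁(x,2y−x) + K₂(x,2y−x)] + 2∫ₓ^{2y−x} K₁(x,x')K₂(x,2y−x') dx'`. -/
theorem jost_product_representation
    (a : ℝ) (ha : 0 < a)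
    (K₁ K₂ : ℝ → ℝ → ℝ)
    (hK₁ : Continuous fun p : ℝ × ℝ => K₁ p.1 p.2)
    (hK₂ : Continuous fun p : ℝ × ℝ => K₂ p.1 p.2)
    (hK₁supp : ∀ x y : ℝ, (y < x ∨ a < y) → K₁ x y = 0)
    (hK₂supp : ∀ x y : ℝ, (y < x ∨ a < y) → K₂ x y = 0)
    (z s : ℂ) (hs : s ^ 2 = z) (him : 0 ≤ s.im)
    (f₁ f₂ : ℝ → ℂ)
    (hf₁ : ∀ x : ℝ, f₁ x = Complex.exp (I * s * x)
      + ∫ y in x..a, (K₁ x y : ℂ) * Complex.exp (I * s * y))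
    (hf₂ : ∀ x : ℝ, f₂ x = Complex.exp (I * s * x)
      + ∫ y in x..a, (K₂ x y : ℂ) * Complex.exp (I * s * y))
    (L : ℝ → ℝ → ℝ)
    (hL : ∀ x y : ℝ, x ≤ y →
      L x y = 2 * (K₁ x (2*y - x) + K₂ x (2*y - x))
        + 2 * ∫ t in x..(2*y - x), K₁ x t * K₂ x (2*y - t))
    (hLzero : ∀ x y : ℝ, y < x → L x y = 0) :
    ∀ x ∈ Set.Icc (0:ℝ) a,
      f₁ x * f₂ x = Complex.exp (2 * I * s * x)
        + ∫ y in x..a, (L x y : ℂ) * Complex.exp (2 * I * s * y) := by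
  intro x hx
  obtain ⟨hx0, hxa⟩ := hx
  have hKx₁ : Continuous fun t => K₁ x t := hK₁.comp (Continuous.prodMk_right x)
  have hKx₂ : Continuous fun t => K₂ x t := hK₂.comp (Continuous.prodMk_right x)
  have hE : Continuous fun y : ℝ => Complex.exp (2 * I * s * y) := by fun_prop
  set P₁ : ℂ := ∫ y in x..a, (K₁ x y : ℂ) * Complex.exp (I * s * y) with hP₁
  set P₂ : ℂ := ∫ y in x..a, (K₂ x y : ℂ) * Complex.exp (I * s * y) with hP₂
  set H : ℝ → ℂ := fun y => ∫ u in x..a, 2 * (K₁ x u : ℂ) * (K₂ x (2*y - u) : ℂ) with hHdef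
  -- cross term
  have hC : P₁ * P₂ = ∫ y in x..a, H y * Complex.exp (2 * I * s * y) := by
    rw [hP₁, ← intervalIntegral.integral_mul_const]
    rw [intervalIntegral.integral_congr
      (g := fun u : ℝ => ∫ y in x..a,
        2 * (K₁ x u : ℂ) * (K₂ x (2*y - u) : ℂ) * Complex.exp (2 * I * s * y))]
    · rw [fubini_rect (by fun_prop) hxa]
      apply intervalIntegral.integral_congr
      intro y _
      simp only
      rw [intervalIntegral.integral_mul_const]
    · intro u hu
      rw [Set.uIcc_of_le hxa] at hu
      have h1 : (K₁ x u : ℂ) * Complex.exp (I * s * u) * P₂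
          = (K₁ x u : ℂ) * (Complex.exp (I * s * u) * P₂) := by ring
      simp only
      rw [h1, subB hK₂ hK₂supp x u hu.1 hu.2 s, ← intervalIntegral.integral_const_mul]
      apply intervalIntegral.integral_congr
      intro y _
      simp only
      ring
  -- identify H with the real inner integral in L
  have hH : ∀ y : ℝ, x ≤ y →
      H y = 2 * ((∫ t in x..(2*y - x), K₁ x t * K₂ x (2*y - t) : ℝ) : ℂ) := by
    intro y hxy
    have hcont : Continuous fun u : ℝ => K₁ x u * K₂ x (2*y - u) := by fun_prop
    have hvan : ∀ t : ℝ, t < x ∨ min a (2*y - x) < t → K₁ x t * K₂ x (2*y - t) = 0 := by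
      intro t ht
      rcases ht with ht | ht
      · rw [hK₁supp x t (Or.inl ht), zero_mul]
      · rcases min_lt_iff.mp ht with h | h
        · rw [hK₁supp x t (Or.inr h), zero_mul]
        · rw [hK₂supp x (2*y - t) (Or.inl (by linarith)), mul_zero]
    have hmin : x ≤ min a (2*y - x) := le_min hxa (by linarith)
    have e1 : (∫ u in x..a, K₁ x u * K₂ x (2*y - u))
        = ∫ u in x..(min a (2*y - x)), K₁ x u * K₂ x (2*y - u) :=
      ext_integral hcont le_rfl hmin (min_le_left _ _) hvan
    have e2 : (∫ u in x..(2*y - x), K₁ x u * K₂ x (2*y - u))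
        = ∫ u in x..(min a (2*y - x)), K₁ x u * K₂ x (2*y - u) :=
      ext_integral hcont le_rfl hmin (min_le_right _ _) hvan
    rw [hHdef]
    simp only
    have : (fun u : ℝ => 2 * (K₁ x u : ℂ) * (K₂ x (2*y - u) : ℂ))
        = fun u : ℝ => (2:ℂ) * (((K₁ x u * K₂ x (2*y - u) : ℝ)) : ℂ) := by
      funext u; push_cast; ring
    rw [this, intervalIntegral.integral_const_mul, intervalIntegral.integral_ofReal,
      e1, ← e2]
  -- split the L integral
  have hIH : Continuous H := by
    rw [hHdef]; fun_prop
  have hsplit : (∫ y in x..a, (L x y : ℂ) * Complex.exp (2 * I * s * y))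
      = (∫ y in x..a, 2 * (K₁ x (2*y - x) : ℂ) * Complex.exp (2 * I * s * y))
      + (∫ y in x..a, 2 * (K₂ x (2*y - x) : ℂ) * Complex.exp (2 * I * s * y))
      + ∫ y in x..a, H y * Complex.exp (2 * I * s * y) := by
    have i1 : IntervalIntegrable
        (fun y : ℝ => 2 * (K₁ x (2*y - x) : ℂ) * Complex.exp (2 * I * s * y)) volume x a :=
      (by fun_prop : Continuous _).intervalIntegrable x a
    have i2 : IntervalIntegrable
        (fun y : ℝ => 2 * (K₂ x (2*y - x) : ℂ) * Complex.exp (2 * I * s * y)) volume x a :=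
      (by fun_prop : Continuous _).intervalIntegrable x a
    have i3 : IntervalIntegrable
        (fun y : ℝ => H y * Complex.exp (2 * I * s * y)) volume x a :=
      (hIH.mul hE).intervalIntegrable x a
    have i12 : IntervalIntegrable
        (fun y : ℝ => 2 * (K₁ x (2*y - x) : ℂ) * Complex.exp (2 * I * s * y)
          + 2 * (K₂ x (2*y - x) : ℂ) * Complex.exp (2 * I * s * y)) volume x a := i1.add i2
    rw [show (∫ y in x..a, (L x y : ℂ) * Complex.exp (2 * I * s * y))
        = ∫ y in x..a, (2 * (K₁ x (2*y - x) : ℂ) * Complex.exp (2 * I * s * y)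
          + 2 * (K₂ x (2*y - x) : ℂ) * Complex.exp (2 * I * s * y))
          + H y * Complex.exp (2 * I * s * y) from intervalIntegral.integral_congr ?_,
      intervalIntegral.integral_add i12 i3, intervalIntegral.integral_add i1 i2]
    intro y hy
    rw [Set.uIcc_of_le hxa] at hy
    have hxy : x ≤ y := hy.1
    simp only
    rw [hL x y hxy, hH y hxy]
    push_cast
    ring
  -- assemble
  rw [hf₁ x, hf₂ x, ← hP₁, ← hP₂, hsplit]
  have hee : Complex.exp (I * s * x) * Complex.exp (I * s * x)
      = Complex.exp (2 * I * s * x) := by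
    rw [← Complex.exp_add]; ring_nf
  have h2 := subB hK₂ hK₂supp x x le_rfl hxa s
  have h1 := subB hK₁ hK₁supp x x le_rfl hxa s
  rw [← hP₂] at h2
  rw [← hP₁] at h1
  calc (Complex.exp (I * s * x) + P₁) * (Complex.exp (I * s * x) + P₂)
      = Complex.exp (I * s * x) * Complex.exp (I * s * x)
        + Complex.exp (I * s * x) * P₁ + Complex.exp (I * s * x) * P₂ + P₁ * P₂ := by ring
    _ = _ := by rw [hee, h1, h2, hC]; ring
end

section
/- For α ∈ (0,π) and the fractional-linear transform m_α(z) = (−sin α + cos α · m(z))/(cos α + sin α · m(z)): if m₁, m₂ satisfy m_j(z) = i√z + O(1) along a ray arg z = π − ε and |m_{1,α}(z) − m_{2,α}(z)| = O(e^{−2 Im(√z) a}) along that ray, then |m₁(z) − m₂(z)| = O(|z| e^{−2 Im(√z) a}) along the same ray. -/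
open Complex Real Filter

/-!
Since `cos² α + sin² α = 1`, the Möbius map `m ↦ (-sin α + cos α · m)/(cos α + sin α · m)` has
unit determinant, so `m₁ - m₂ = (m_{1,α} - m_{2,α}) · (cos α + sin α · m₁)(cos α + sin α · m₂)`.
By the asymptotics `m_j = i√z + O(1)` each denominator is `O(√r)` on the ray, so their product is
`O(r)`, which turns the bound `O(e^{-2 Im(√z) a})` for `m_{1,α} - m_{2,α}` into `O(r e^{-2 Im(√z) a})`.
-/

lemma sub_mobius_eq_div (c s x y : ℂ) (h : c ^ 2 + s ^ 2 = 1)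
    (hx : c + s * x ≠ 0) (hy : c + s * y ≠ 0) :
    (-s + c * x) / (c + s * x) - (-s + c * y) / (c + s * y)
      = (x - y) / ((c + s * x) * (c + s * y)) := by
  field_simp
  linear_combination (x - y) * h

lemma norm_sub_le_of_norm_sub_mobius_le (α : ℝ) {x y : ℂ} {E A B : ℝ}
    (hx : (Real.cos α : ℂ) + Real.sin α * x ≠ 0) (hy : (Real.cos α : ℂ) + Real.sin α * y ≠ 0)
    (hE : ‖(-(Real.sin α : ℂ) + Real.cos α * x) / (Real.cos α + Real.sin α * x)
        - (-(Real.sin α : ℂ) + Real.cos α * y) / (Real.cos α + Real.sin α * y)‖ ≤ E)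
    (hA : ‖(Real.cos α : ℂ) + Real.sin α * x‖ ≤ A) (hB : ‖(Real.cos α : ℂ) + Real.sin α * y‖ ≤ B) :
    ‖x - y‖ ≤ E * (A * B) := by
  have hunit : (Real.cos α : ℂ) ^ 2 + (Real.sin α : ℂ) ^ 2 = 1 := by
    exact_mod_cast Real.cos_sq_add_sin_sq α
  rw [sub_mobius_eq_div _ _ x y hunit hx hy] at hE
  rw [← div_mul_cancel₀ (x - y) (mul_ne_zero hx hy), norm_mul, norm_mul]
  gcongr
  exacts [(norm_nonneg _).trans hE, (norm_nonneg _).trans hA]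

lemma norm_cos_add_sin_mul_le (α : ℝ) (m : ℂ) :
    ‖(Real.cos α : ℂ) + Real.sin α * m‖ ≤ 1 + ‖m‖ := by
  calc ‖(Real.cos α : ℂ) + Real.sin α * m‖
      ≤ ‖(Real.cos α : ℂ)‖ + ‖(Real.sin α : ℂ)‖ * ‖m‖ := (norm_add_le _ _).trans_eq (by rw [norm_mul])
    _ ≤ 1 + 1 * ‖m‖ := by
        gcongr
        · exact (Complex.norm_real _).trans_le (abs_cos_le_one α)
        · exact (Complex.norm_real _).trans_le (abs_sin_le_one α)
    _ = 1 + ‖m‖ := by rw [one_mul]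

lemma norm_cos_add_sin_mul_le_mul_sqrt (α : ℝ) {m w : ℂ} {C r : ℝ} (hr : 1 ≤ r)
    (hw : ‖w‖ = √r) (hm : ‖m - I * w‖ ≤ C) :
    ‖(Real.cos α : ℂ) + Real.sin α * m‖ ≤ (2 + |C|) * √r := by
  have hm' : ‖m‖ ≤ C + √r := by
    calc ‖m‖ ≤ ‖m - I * w‖ + ‖I * w‖ := norm_le_norm_sub_add m (I * w)
      _ ≤ C + √r := by rw [norm_mul, Complex.norm_I, one_mul, hw]; gcongr
  have hsqrt : 1 ≤ √r := Real.one_le_sqrt.mpr hr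
  nlinarith [norm_cos_add_sin_mul_le α m, le_abs_self C, abs_nonneg C]

lemma norm_eq_sqrt_of_sq_eq_ofReal_mul_exp {w : ℂ} {r θ : ℝ} (hr : 0 ≤ r)
    (h : w ^ 2 = r * exp (I * θ)) : ‖w‖ = √r := by
  have hsq : ‖w‖ ^ 2 = r := by
    rw [← norm_pow, h, norm_mul, Complex.norm_real, Real.norm_of_nonneg hr, mul_comm I,
      Complex.norm_exp_ofReal_mul_I, mul_one]
  rw [← hsq, Real.sqrt_sq (norm_nonneg w)]

lemma eventually_atTop_of_exists_forall_ge_pos {P : ℝ → Prop}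
    (h : ∃ r₀ : ℝ, ∀ r ≥ r₀, r > 0 → P r) : ∀ᶠ r in atTop, P r := by
  obtain ⟨r₀, hr₀⟩ := h
  filter_upwards [eventually_ge_atTop r₀, eventually_gt_atTop 0] with r hr hr' using hr₀ r hr hr'

lemma exists_forall_ge_pos_of_eventually_atTop {P : ℝ → Prop} (h : ∀ᶠ r in atTop, P r) :
    ∃ r₀ : ℝ, ∀ r ≥ r₀, r > 0 → P r := by
  obtain ⟨r₀, hr₀⟩ := eventually_atTop.mp h
  exact ⟨r₀, fun r hr _ => hr₀ r hr⟩

theorem boundary_condition_m_function_comparison_general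
    (a : ℝ) (ε : ℝ)
    (α : ℝ)
    (m₁ m₂ : ℂ → ℂ) (s : ℝ → ℂ)
    (hs : ∀ r > (0:ℝ), (s r) ^ 2 = (r : ℂ) * Complex.exp (I * (π - ε)) ∧ 0 < (s r).im)
    (hasym₁ : ∃ C₁ r₁ : ℝ, ∀ r ≥ r₁, r > 0 →
      ‖m₁ ((r : ℂ) * Complex.exp (I * (π - ε))) - I * s r‖ ≤ C₁)
    (hasym₂ : ∃ C₁ r₁ : ℝ, ∀ r ≥ r₁, r > 0 →
      ‖m₂ ((r : ℂ) * Complex.exp (I * (π - ε))) - I * s r‖ ≤ C₁)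
    (hden : ∃ r₂ : ℝ, ∀ r ≥ r₂, r > 0 →
      (Real.cos α : ℂ) + (Real.sin α : ℂ) * m₁ ((r : ℂ) * Complex.exp (I * (π - ε))) ≠ 0 ∧
      (Real.cos α : ℂ) + (Real.sin α : ℂ) * m₂ ((r : ℂ) * Complex.exp (I * (π - ε))) ≠ 0)
    (hO : ∃ C > (0:ℝ), ∃ r₃ : ℝ, ∀ r ≥ r₃, r > 0 →
      ‖(-(Real.sin α : ℂ) + (Real.cos α : ℂ) * m₁ ((r : ℂ) * Complex.exp (I * (π - ε))))
          / ((Real.cos α : ℂ) + (Real.sin α : ℂ) * m₁ ((r : ℂ) * Complex.exp (I * (π - ε))))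
        - (-(Real.sin α : ℂ) + (Real.cos α : ℂ) * m₂ ((r : ℂ) * Complex.exp (I * (π - ε))))
          / ((Real.cos α : ℂ) + (Real.sin α : ℂ) * m₂ ((r : ℂ) * Complex.exp (I * (π - ε))))‖
        ≤ C * Real.exp (-2 * (s r).im * a)) :
    ∃ C > (0:ℝ), ∃ r₀ : ℝ, ∀ r ≥ r₀, r > 0 →
      ‖m₁ ((r : ℂ) * Complex.exp (I * (π - ε)))
        - m₂ ((r : ℂ) * Complex.exp (I * (π - ε)))‖
        ≤ C * r * Real.exp (-2 * (s r).im * a) := by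
  obtain ⟨C₁, hasym₁⟩ := hasym₁
  obtain ⟨C₂, hasym₂⟩ := hasym₂
  obtain ⟨C, hC, hO⟩ := hO
  refine ⟨C * ((2 + |C₁|) * (2 + |C₂|)), by positivity, exists_forall_ge_pos_of_eventually_atTop ?_⟩
  filter_upwards [eventually_atTop_of_exists_forall_ge_pos hasym₁,
    eventually_atTop_of_exists_forall_ge_pos hasym₂, eventually_atTop_of_exists_forall_ge_pos hden,
    eventually_atTop_of_exists_forall_ge_pos hO, eventually_ge_atTop 1]
    with r hm₁ hm₂ ⟨hd₁, hd₂⟩ hOr hr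
  have hsr : ‖s r‖ = √r :=
    norm_eq_sqrt_of_sq_eq_ofReal_mul_exp (θ := π - ε) (by linarith)
      (by push_cast; exact (hs r (by linarith)).1)
  calc _ ≤ C * Real.exp (-2 * (s r).im * a) * ((2 + |C₁|) * √r * ((2 + |C₂|) * √r)) :=
        norm_sub_le_of_norm_sub_mobius_le α hd₁ hd₂ hOr
          (norm_cos_add_sin_mul_le_mul_sqrt α hr hsr hm₁)
          (norm_cos_add_sin_mul_le_mul_sqrt α hr hsr hm₂)
    _ = C * ((2 + |C₁|) * (2 + |C₂|)) * r * Real.exp (-2 * (s r).im * a) := by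
        linear_combination C * Real.exp (-2 * (s r).im * a) * ((2 + |C₁|) * (2 + |C₂|)) *
          Real.mul_self_sqrt (by linarith : (0:ℝ) ≤ r)

/-- If `m₁, m₂` satisfy `m_j(z) = i√z + O(1)` along the ray `arg z = π − ε`, and
the transformed functions `m_{j,α} = (−sin α + cos α · m_j)/(cos α + sin α · m_j)`
satisfy `|m_{1,α}(z) − m_{2,α}(z)| = O(e^{−2 Im(√z) a})` along that ray, then
`|m₁(z) − m₂(z)| = O(|z| e^{−2 Im(√z) a})` along the same ray. -/
theorem boundary_condition_m_function_comparison
    (a : ℝ) (ha : 0 < a) (ε : ℝ) (hε : 0 < ε) (hε' : ε < π / 2)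
    (α : ℝ) (hα : 0 < α) (hα' : α < π)
    (m₁ m₂ : ℂ → ℂ) (s : ℝ → ℂ)
    (hs : ∀ r > (0:ℝ), (s r) ^ 2 = (r : ℂ) * Complex.exp (I * (π - ε)) ∧ 0 < (s r).im)
    (hasym₁ : ∃ C₁ r₁ : ℝ, ∀ r ≥ r₁, r > 0 →
      ‖m₁ ((r : ℂ) * Complex.exp (I * (π - ε))) - I * s r‖ ≤ C₁)
    (hasym₂ : ∃ C₁ r₁ : ℝ, ∀ r ≥ r₁, r > 0 →
      ‖m₂ ((r : ℂ) * Complex.exp (I * (π - ε))) - I * s r‖ ≤ C₁)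
    (hden : ∃ r₂ : ℝ, ∀ r ≥ r₂, r > 0 →
      (Real.cos α : ℂ) + (Real.sin α : ℂ) * m₁ ((r : ℂ) * Complex.exp (I * (π - ε))) ≠ 0 ∧
      (Real.cos α : ℂ) + (Real.sin α : ℂ) * m₂ ((r : ℂ) * Complex.exp (I * (π - ε))) ≠ 0)
    (hO : ∃ C > (0:ℝ), ∃ r₃ : ℝ, ∀ r ≥ r₃, r > 0 →
      ‖(-(Real.sin α : ℂ) + (Real.cos α : ℂ) * m₁ ((r : ℂ) * Complex.exp (I * (π - ε))))
          / ((Real.cos α : ℂ) + (Real.sin α : ℂ) * m₁ ((r : ℂ) * Complex.exp (I * (π - ε))))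
        - (-(Real.sin α : ℂ) + (Real.cos α : ℂ) * m₂ ((r : ℂ) * Complex.exp (I * (π - ε))))
          / ((Real.cos α : ℂ) + (Real.sin α : ℂ) * m₂ ((r : ℂ) * Complex.exp (I * (π - ε))))‖
        ≤ C * Real.exp (-2 * (s r).im * a)) :
    ∃ C > (0:ℝ), ∃ r₀ : ℝ, ∀ r ≥ r₀, r > 0 →
      ‖m₁ ((r : ℂ) * Complex.exp (I * (π - ε)))
        - m₂ ((r : ℂ) * Complex.exp (I * (π - ε)))‖
        ≤ C * r * Real.exp (-2 * (s r).im * a) :=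
  boundary_condition_m_function_comparison_general a ε α m₁ m₂ s hs hasym₁ hasym₂ hden hO
end

section
/- If a function h analytic on a sector and continuous up to its boundary satisfies |h(z)| ≤ C e^{−2|z|^{1/2} a} on the two boundary rays of the sector with opening angle less than π, and h is bounded in the sector, then |h(z)| ≤ C e^{−2 Re(√(−z)) a}-type exponential decay extends to the interior of the sector (Phragmén–Lindelöf for difference of m-functions): in particular the bound |h(z)| = O(e^{−2|z|^{1/2} a}) holds along the central ray of the sector. -/
/-!
The substitution `z = v - exp w` maps the horizontal strip `|Im w| < ε` onto the sector, and
`exp (w / 2)` is then a branch of `√(v - z)`. Hence `G w = h (v - exp w) * exp (2a exp (w / 2))`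
(`stripPullback` below) is holomorphic on the strip and bounded by `C` on its edges, where
`Re √(v - z) = |z - v|^{1/2} cos (ε/2)`; it grows at most like `exp (B exp |Re w|)` because `h` is
polynomially bounded. Since the strip has width `2ε < π`, the Phragmén–Lindelöf principle for
strips gives `‖G‖ ≤ C` on the whole strip, and on the real axis `w = log r` this is the claimed
decay of `h (v - r)`.
-/

open Complex Real Set Filter Topology

def leftSector (v : ℂ) (ε : ℝ) : Set ℂ := {z | z ≠ v ∧ |arg (v - z)| < ε}

lemma arg_exp_of_im_mem {w : ℂ} (hw : w.im ∈ Ioc (-π) π) : arg (exp w) = w.im := by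
  rw [arg_exp, toIocMod_eq_self, show -π + 2 * π = π by ring]
  exact hw

section Sector

variable {v : ℂ} {ε : ℝ}

lemma mapsTo_sub_exp_leftSector (hε : ε ≤ π) :
    MapsTo (fun w : ℂ ↦ v - exp w) (im ⁻¹' Ioo (-ε) ε) (leftSector v ε) := by
  rintro w ⟨hlo, hhi⟩
  refine ⟨fun heq ↦ exp_ne_zero w (sub_eq_self.1 heq), ?_⟩
  rw [sub_sub_cancel, arg_exp_of_im_mem ⟨by linarith, by linarith⟩]
  exact abs_lt.2 ⟨hlo, hhi⟩

lemma mapsTo_sub_exp_closure_leftSector (hε₀ : 0 < ε) (hε : ε ≤ π) :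
    MapsTo (fun w : ℂ ↦ v - exp w) (im ⁻¹' Icc (-ε) ε) (closure (leftSector v ε)) := by
  rw [← closure_Ioo (by linarith : -ε ≠ ε), ← closure_preimage_im]
  exact (mapsTo_sub_exp_leftSector hε).closure (by fun_prop)

lemma sub_exp_notMem_leftSector (hε : ε < π) {w : ℂ} (hw : |w.im| = ε) :
    v - exp w ∉ leftSector v ε := by
  rintro ⟨-, hlt⟩
  have := abs_le.1 hw.le
  rw [sub_sub_cancel, arg_exp_of_im_mem ⟨by linarith, by linarith⟩, hw] at hlt
  exact hlt.false

end Sector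

lemma norm_exp_mul_exp_half (c : ℝ) (w : ℂ) :
    ‖exp (c * exp (w / 2))‖ = Real.exp (c * (Real.exp (w.re / 2) * Real.cos (w.im / 2))) := by
  rw [norm_exp, re_ofReal_mul, exp_re, div_ofNat_re, div_ofNat_im]

lemma norm_exp_mul_exp_half_le {c : ℝ} (hc : 0 ≤ c) (w : ℂ) :
    ‖exp (c * exp (w / 2))‖ ≤ Real.exp (c * Real.exp |w.re|) := by
  rw [norm_exp_mul_exp_half]
  gcongr
  calc Real.exp (w.re / 2) * Real.cos (w.im / 2) ≤ Real.exp (w.re / 2) * 1 := by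
        gcongr; exact Real.cos_le_one _
    _ ≤ Real.exp |w.re| := by
        rw [mul_one]; gcongr; linarith [le_abs_self w.re, abs_nonneg w.re]

lemma one_add_norm_sub_exp_le (v w : ℂ) : 1 + ‖v - exp w‖ ≤ (2 + ‖v‖) * Real.exp |w.re| := by
  have hre : Real.exp w.re ≤ Real.exp |w.re| := Real.exp_le_exp.2 (le_abs_self _)
  have hone : 1 ≤ Real.exp |w.re| := Real.one_le_exp (abs_nonneg _)
  have := norm_sub_le v (exp w)
  rw [norm_exp] at this
  nlinarith [norm_nonneg v]

/-- For `z = v - exp w` in the sector, `exp (w / 2) = √(v - z)`, so the second factor is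
`exp (2a √(v - z))`, the reciprocal of the decay expected of `h`. -/
noncomputable def stripPullback (h : ℂ → ℂ) (v : ℂ) (a : ℝ) (w : ℂ) : ℂ :=
  h (v - exp w) * exp ((2 * a : ℝ) * exp (w / 2))

section StripPullback

variable {h : ℂ → ℂ} {v : ℂ} {a ε : ℝ}

lemma norm_stripPullback_le_of_edge {C : ℝ} {w : ℂ} (hw : |w.im| = ε)
    (hb : ‖h (v - exp w)‖ ≤ C * Real.exp (-2 * √‖v - exp w - v‖ * a * Real.cos (ε / 2))) :
    ‖stripPullback h v a w‖ ≤ C := by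
  have hcos : Real.cos (w.im / 2) = Real.cos (ε / 2) := by
    rw [← Real.cos_abs, abs_div, hw, abs_two]
  rw [sub_sub_cancel_left, norm_neg, norm_exp, ← Real.exp_half] at hb
  calc ‖stripPullback h v a w‖
      = ‖h (v - exp w)‖ * Real.exp (2 * a * (Real.exp (w.re / 2) * Real.cos (ε / 2))) := by
        rw [stripPullback, norm_mul, norm_exp_mul_exp_half, hcos]
    _ ≤ C * Real.exp (-2 * Real.exp (w.re / 2) * a * Real.cos (ε / 2))
          * Real.exp (2 * a * (Real.exp (w.re / 2) * Real.cos (ε / 2))) := by gcongr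
    _ = C := by rw [mul_assoc, ← Real.exp_add]; ring_nf; simp

lemma norm_stripPullback_le_of_poly {C₁ : ℝ} {n : ℕ} (ha : 0 ≤ a) {w : ℂ}
    (hp : ‖h (v - exp w)‖ ≤ C₁ * (1 + ‖v - exp w‖) ^ n) :
    ‖stripPullback h v a w‖ ≤ C₁ * (2 + ‖v‖) ^ n * Real.exp ((n + 2 * a) * Real.exp |w.re|) := by
  have hC₁ : 0 ≤ C₁ := nonneg_of_mul_nonneg_left ((norm_nonneg _).trans hp) (by positivity)
  have hx : |w.re| ≤ Real.exp |w.re| := by linarith [Real.add_one_le_exp |w.re|]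
  calc ‖stripPullback h v a w‖
      ≤ C₁ * (1 + ‖v - exp w‖) ^ n * Real.exp (2 * a * Real.exp |w.re|) := by
        rw [stripPullback, norm_mul]
        gcongr
        exact norm_exp_mul_exp_half_le (by positivity) w
    _ ≤ C₁ * ((2 + ‖v‖) * Real.exp |w.re|) ^ n * Real.exp (2 * a * Real.exp |w.re|) := by
        gcongr
        exact one_add_norm_sub_exp_le v w
    _ = C₁ * (2 + ‖v‖) ^ n * Real.exp (n * |w.re| + 2 * a * Real.exp |w.re|) := by
        rw [mul_pow, ← Real.exp_nat_mul, Real.exp_add]; ring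
    _ ≤ C₁ * (2 + ‖v‖) ^ n * Real.exp ((n + 2 * a) * Real.exp |w.re|) := by
        gcongr
        nlinarith [Nat.cast_nonneg (α := ℝ) n]

lemma diffContOnCl_stripPullback (hε₀ : 0 < ε) (hε : ε ≤ π)
    (hd : DifferentiableOn ℂ h (leftSector v ε)) (hc : ContinuousOn h (closure (leftSector v ε))) :
    DiffContOnCl ℂ (stripPullback h v a) (im ⁻¹' Ioo (-ε) ε) := by
  refine ⟨?_, ?_⟩
  · exact (hd.comp (f := fun w : ℂ ↦ v - exp w) (by fun_prop) (mapsTo_sub_exp_leftSector hε)).mul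
      (by fun_prop)
  · rw [closure_preimage_im, closure_Ioo (by linarith)]
    exact (hc.comp (f := fun w : ℂ ↦ v - exp w) (by fun_prop)
      (mapsTo_sub_exp_closure_leftSector hε₀ hε)).mul (by fun_prop)

theorem norm_stripPullback_le {C C₁ : ℝ} {n : ℕ} (ha : 0 ≤ a) (hε₀ : 0 < ε) (hε : ε < π / 2)
    (hd : DifferentiableOn ℂ h (leftSector v ε)) (hc : ContinuousOn h (closure (leftSector v ε)))
    (hpoly : ∀ z ∈ closure (leftSector v ε), ‖h z‖ ≤ C₁ * (1 + ‖z‖) ^ n)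
    (hedge : ∀ z ∈ closure (leftSector v ε) \ leftSector v ε,
      ‖h z‖ ≤ C * Real.exp (-2 * √‖z - v‖ * a * Real.cos (ε / 2)))
    {w : ℂ} (hw : w.im ∈ Icc (-ε) ε) : ‖stripPullback h v a w‖ ≤ C := by
  have hεπ : ε < π := by linarith [Real.pi_pos]
  have hedge' (w : ℂ) (hw : |w.im| = ε) : ‖stripPullback h v a w‖ ≤ C :=
    norm_stripPullback_le_of_edge hw (hedge _
      ⟨mapsTo_sub_exp_closure_leftSector hε₀ hεπ.le (abs_le.1 hw.le),
        sub_exp_notMem_leftSector hεπ hw⟩)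
  -- `c = 1 < π / (2ε)` is where the opening angle `2ε < π` enters.
  refine PhragmenLindelof.horizontal_strip (diffContOnCl_stripPullback hε₀ hεπ.le hd hc)
    ⟨1, ?_, n + 2 * a, ?_⟩ (fun w hw ↦ hedge' w ?_) (fun w hw ↦ hedge' w ?_) hw.1 hw.2
  · rw [lt_div_iff₀ (by linarith)]
    linarith
  · refine .of_bound (C₁ * (2 + ‖v‖) ^ n) (eventually_inf_principal.2 (.of_forall fun w hw ↦ ?_))
    rw [one_mul, Real.norm_eq_abs, Real.abs_exp]
    exact norm_stripPullback_le_of_poly ha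
      (hpoly _ (subset_closure (mapsTo_sub_exp_leftSector hεπ.le hw)))
  · rw [hw, abs_neg, abs_of_pos hε₀]
  · rw [hw, abs_of_pos hε₀]

lemma norm_le_of_norm_stripPullback_log_le {C r : ℝ} (hr : 0 < r)
    (hG : ‖stripPullback h v a (Real.log r)‖ ≤ C) :
    ‖h (v - r)‖ ≤ C * Real.exp (-2 * √r * a) := by
  have hG' : ‖h (v - r)‖ * Real.exp (2 * a * √r) ≤ C := by
    rwa [stripPullback, norm_mul, norm_exp_mul_exp_half, ofReal_re, ofReal_im, zero_div,
      Real.cos_zero, mul_one, ← ofReal_exp, Real.exp_log hr, Real.exp_half, Real.exp_log hr] at hG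
  calc ‖h (v - r)‖ = ‖h (v - r)‖ * Real.exp (2 * a * √r) * Real.exp (-2 * √r * a) := by
        rw [mul_assoc, ← Real.exp_add]; ring_nf; simp
    _ ≤ C * Real.exp (-2 * √r * a) := by gcongr

end StripPullback

/-- Phragmén–Lindelöf for the difference of `m`-functions: if `h` is analytic on a
sector with vertex `E₀ − 1`, symmetry axis the negative real direction, and
half-opening angle `ε < π/2`, is continuous and polynomially bounded on its
closure, and satisfies `|h(z)| ≤ C e^{−2|z−v|^{1/2} a cos(ε/2)}` on the boundary,
then `|h(z)| = O(e^{−2|z−v|^{1/2} a})` along the central ray. -/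
theorem phragmen_lindelof_m_function_difference
    (a : ℝ) (ha : 0 < a) (E₀ : ℝ) (ε : ℝ) (hε : 0 < ε) (hε' : ε < π / 2)
    (h : ℂ → ℂ)
    (S : Set ℂ)
    (hS : S = {z : ℂ | z ≠ ((E₀ - 1 : ℝ) : ℂ) ∧
      |Complex.arg (((E₀ - 1 : ℝ) : ℂ) - z)| < ε})
    (hanal : DifferentiableOn ℂ h S)
    (hcont : ContinuousOn h (closure S))
    (hpoly : ∃ C₁ > (0:ℝ), ∃ n : ℕ, ∀ z ∈ closure S, ‖h z‖ ≤ C₁ * (1 + ‖z‖) ^ n)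
    (C : ℝ) (hC : 0 < C)
    (hbdry : ∀ z ∈ closure S \ S,
      ‖h z‖ ≤ C * Real.exp (-2 * Real.sqrt ‖z - ((E₀ - 1 : ℝ) : ℂ)‖ * a * Real.cos (ε / 2))) :
    ∃ C' > (0:ℝ), ∃ r₀ : ℝ, ∀ r ≥ r₀, r > 0 →
      ‖h (((E₀ - 1 : ℝ) : ℂ) - (r : ℂ))‖ ≤ C' * Real.exp (-2 * Real.sqrt r * a) := by
  obtain ⟨C₁, -, n, hpoly⟩ := hpoly
  subst hS
  refine ⟨C, hC, 0, fun r _ hr ↦ norm_le_of_norm_stripPullback_log_le hr ?_⟩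
  exact norm_stripPullback_le ha.le hε hε' hanal hcont hpoly hbdry (by simp [hε.le])
end

section
/- Let A₁, A₂ be bounded self-adjoint Jacobi matrices on ℓ²(ℕ₀) with entries a_{j,k} > 0 (off-diagonal) and b_{j,k} ∈ ℝ (diagonal), and m_j(z) = ⟨δ₀, (A_j − z)^{−1} δ₀⟩. If |m₁(z) − m₂(z)| = O(|z|^{−N}) as |z| → ∞ for some even N ≥ 4, then a_{1,k} = a_{2,k} and b_{1,k} = b_{2,k} for 0 ≤ k ≤ (N−4)/2. -/
/-!
Expanding the resolvent in a Neumann series gives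
`m_j(z) = -∑_{n<M} μ_{j,n} z^{-n-1} + O(|z|^{-M-1})` with `μ_{j,n} = ⟨δ₀, A_jⁿ δ₀⟩`, so the
hypothesis forces `μ_{1,n} = μ_{2,n}` for `n ≤ N - 2`. The vector `Aᵏ δ₀` is supported in
`[0, k]` with top entry `a_0 ⋯ a_{k-1}`, and `μ_{i+j} = ⟨Aⁱ δ₀, Aʲ δ₀⟩`. Hence if the
coefficients agree below `K`, then `μ_{2K+1}` changes by `(b_{1,K} - b_{2,K}) (a_0 ⋯ a_{K-1})²`
and `μ_{2K+2}` by `(a_{1,K}² - a_{2,K}²) (a_0 ⋯ a_{K-1})²`; by positivity of the `a`'s this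
recovers the coefficients one index at a time.
-/

open Finset Filter Asymptotics Bornology
open scoped InnerProductSpace Topology

namespace Jacobi

variable {R : Type*} [CommRing R]

def op (a b u : ℕ → R) (k : ℕ) : R :=
  (if k = 0 then 0 else a (k - 1) * u (k - 1)) + b k * u k + a k * u (k + 1)

def powDelta (a b : ℕ → R) (n : ℕ) : ℕ → R :=
  (op a b)^[n] (Pi.single 0 1)

def moment (a b : ℕ → R) (n : ℕ) : R :=
  powDelta a b n 0

variable {a b a₁ b₁ a₂ b₂ : ℕ → R}

theorem op_sub_op (u : ℕ → R) (k : ℕ) :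
    op a₁ b₁ u k - op a₂ b₂ u k = op (a₁ - a₂) (b₁ - b₂) u k := by
  unfold op
  split_ifs <;> simp only [Pi.sub_apply] <;> ring

theorem op_eq_zero_of_lt {K k : ℕ} (ha : ∀ i < K, a i = 0) (hb : ∀ i < K, b i = 0)
    (u : ℕ → R) (hk : k < K) : op a b u k = 0 := by
  unfold op
  split_ifs <;> simp [ha k hk, hb k hk, ha (k - 1) (by omega)]

theorem op_apply_of_lt {K : ℕ} (ha : ∀ i < K, a i = 0) {u : ℕ → R} (hu : u (K + 1) = 0) :
    op a b u K = b K * u K := by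
  unfold op
  split_ifs with hK
  · simp [hu]
  · simp [hu, ha (K - 1) (by omega)]

theorem map_op {S : Type*} [CommRing S] (f : R →+* S) (u : ℕ → R) (k : ℕ) :
    op (fun i => f (a i)) (fun i => f (b i)) (fun i => f (u i)) k = f (op a b u k) := by
  unfold op
  split_ifs <;> simp

theorem sum_op_mul_comm {K : ℕ} {u v : ℕ → R} (hu : u K = 0) (hv : v K = 0) :
    ∑ k ∈ range (K + 1), op a b u k * v k = ∑ k ∈ range (K + 1), u k * op a b v k := by
  have expand : ∀ u v : ℕ → R, v K = 0 → ∑ k ∈ range (K + 1), op a b u k * v k =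
      ∑ k ∈ range K, a k * (u k * v (k + 1) + u (k + 1) * v k) +
        ∑ k ∈ range (K + 1), b k * u k * v k := by
    intro u v hv
    have hprev : ∑ k ∈ range (K + 1), (if k = 0 then 0 else a (k - 1) * u (k - 1)) * v k =
        ∑ k ∈ range K, a k * u k * v (k + 1) := by
      simp [sum_range_succ' _ K, mul_assoc]
    have hnext : ∑ k ∈ range (K + 1), a k * u (k + 1) * v k =
        ∑ k ∈ range K, a k * u (k + 1) * v k := by
      simp [sum_range_succ _ K, hv]
    simp only [op, add_mul, sum_add_distrib]
    rw [hprev, hnext]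
    simp only [mul_add, sum_add_distrib, mul_assoc]
    ring
  rw [expand u v hv, sum_congr rfl fun k _ => mul_comm (u k) _, expand v u hu]
  congr 1 <;> refine sum_congr rfl fun k _ => by ring

theorem powDelta_zero : powDelta a b 0 = Pi.single 0 1 := rfl

theorem powDelta_succ (n : ℕ) : powDelta a b (n + 1) = op a b (powDelta a b n) :=
  Function.iterate_succ_apply' _ _ _

theorem powDelta_eq_zero_of_lt {n k : ℕ} (h : n < k) : powDelta a b n k = 0 := by
  induction n generalizing k with
  | zero => simp [powDelta_zero, h.ne']
  | succ n ih =>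
    rw [powDelta_succ]
    unfold op
    rw [if_neg (by omega), ih (by omega), ih (by omega), ih (by omega)]
    ring

theorem powDelta_self (n : ℕ) : powDelta a b n n = ∏ i ∈ range n, a i := by
  induction n with
  | zero => simp [powDelta_zero]
  | succ n ih =>
    rw [powDelta_succ]
    simp [op, ih, powDelta_eq_zero_of_lt, prod_range_succ, mul_comm]

theorem powDelta_congr {n : ℕ} (ha : ∀ i < n, a₁ i = a₂ i) (hb : ∀ i < n, b₁ i = b₂ i) :
    powDelta a₁ b₁ n = powDelta a₂ b₂ n := by
  induction n with
  | zero => rfl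
  | succ n ih =>
    have hu := ih (fun i hi => ha i (by omega)) (fun i hi => hb i (by omega))
    funext k
    rcases lt_trichotomy k (n + 1) with hk | rfl | hk
    · rw [← sub_eq_zero, powDelta_succ, powDelta_succ, hu, op_sub_op]
      exact op_eq_zero_of_lt (fun i hi => sub_eq_zero.2 (ha i hi))
        (fun i hi => sub_eq_zero.2 (hb i hi)) _ hk
    · rw [powDelta_self, powDelta_self]
      exact prod_congr rfl fun i hi => ha i (mem_range.1 hi)
    · rw [powDelta_eq_zero_of_lt hk, powDelta_eq_zero_of_lt hk]

theorem moment_add_eq_sum {i j C : ℕ} (h : i + j ≤ C) :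
    moment a b (i + j) = ∑ k ∈ range (C + 1), powDelta a b i k * powDelta a b j k := by
  induction i generalizing j with
  | zero => simp [moment, powDelta_zero, Pi.single_apply]
  | succ i ih =>
    rw [show i + 1 + j = i + (j + 1) by omega, ih (by omega), powDelta_succ (n := j),
      powDelta_succ (n := i)]
    exact (sum_op_mul_comm (powDelta_eq_zero_of_lt (by omega))
      (powDelta_eq_zero_of_lt (by omega))).symm

theorem moment_add (i j : ℕ) :
    moment a b (i + j) = ∑ k ∈ range (j + 1), powDelta a b i k * powDelta a b j k := by
  rw [moment_add_eq_sum le_rfl]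
  refine (sum_subset (range_subset_range.2 (by omega)) fun k _ hk => ?_).symm
  rw [powDelta_eq_zero_of_lt (n := j) (by simp at hk; omega), mul_zero]

theorem moment_sub_moment_odd {K : ℕ} (ha : ∀ i < K, a₁ i = a₂ i) (hb : ∀ i < K, b₁ i = b₂ i) :
    moment a₁ b₁ (2 * K + 1) - moment a₂ b₂ (2 * K + 1) =
      (b₁ K - b₂ K) * (∏ i ∈ range K, a₂ i) ^ 2 := by
  have hd : ∀ i < K, (a₁ - a₂) i = 0 := fun i hi => sub_eq_zero.2 (ha i hi)
  have he : ∀ i < K, (b₁ - b₂) i = 0 := fun i hi => sub_eq_zero.2 (hb i hi)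
  rw [show 2 * K + 1 = (K + 1) + K by ring, moment_add, moment_add, powDelta_succ,
    powDelta_succ, powDelta_congr ha hb, ← sum_sub_distrib]
  simp_rw [← sub_mul, op_sub_op]
  rw [sum_range_succ, sum_eq_zero fun k hk => by rw [op_eq_zero_of_lt hd he _ (mem_range.1 hk),
    zero_mul], op_apply_of_lt hd (powDelta_eq_zero_of_lt (by omega)), powDelta_self]
  simp only [Pi.sub_apply]
  ring

theorem moment_sub_moment_even {K : ℕ} (ha : ∀ i < K, a₁ i = a₂ i) (hb : ∀ i ≤ K, b₁ i = b₂ i) :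
    moment a₁ b₁ (2 * K + 2) - moment a₂ b₂ (2 * K + 2) =
      (a₁ K ^ 2 - a₂ K ^ 2) * (∏ i ∈ range K, a₂ i) ^ 2 := by
  have hd : ∀ i < K, (a₁ - a₂) i = 0 := fun i hi => sub_eq_zero.2 (ha i hi)
  have he : ∀ i < K, (b₁ - b₂) i = 0 := fun i hi => sub_eq_zero.2 (hb i hi.le)
  have hlow : ∀ k < K + 1, powDelta a₁ b₁ (K + 1) k = powDelta a₂ b₂ (K + 1) k := by
    intro k hk
    rw [← sub_eq_zero, powDelta_succ, powDelta_succ, powDelta_congr ha fun i hi => hb i hi.le,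
      op_sub_op]
    rcases Nat.lt_succ_iff_lt_or_eq.1 hk with hk | rfl
    · exact op_eq_zero_of_lt hd he _ hk
    · rw [op_apply_of_lt hd (powDelta_eq_zero_of_lt (by omega)), Pi.sub_apply, hb k le_rfl,
        sub_self, zero_mul]
  have hsum : ∑ k ∈ range (K + 1), powDelta a₁ b₁ (K + 1) k * powDelta a₁ b₁ (K + 1) k =
      ∑ k ∈ range (K + 1), powDelta a₂ b₂ (K + 1) k * powDelta a₂ b₂ (K + 1) k :=
    sum_congr rfl fun k hk => by rw [hlow k (mem_range.1 hk)]
  rw [show 2 * K + 2 = (K + 1) + (K + 1) by ring, moment_add, moment_add,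
    sum_range_succ _ (K + 1), sum_range_succ _ (K + 1), hsum, powDelta_self, powDelta_self,
    prod_range_succ, prod_range_succ, prod_congr rfl fun i hi => ha i (mem_range.1 hi)]
  ring

theorem params_eq_of_moment_eq [LinearOrder R] [IsStrictOrderedRing R]
    (ha₁ : ∀ k, 0 < a₁ k) (ha₂ : ∀ k, 0 < a₂ k) {K : ℕ}
    (h : ∀ n ≤ 2 * K + 2, moment a₁ b₁ n = moment a₂ b₂ n) : a₁ K = a₂ K ∧ b₁ K = b₂ K := by
  induction K using Nat.strong_induction_on with
  | _ K ih =>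
  have hlow : ∀ i < K, a₁ i = a₂ i ∧ b₁ i = b₂ i := fun i hi => ih i hi fun n hn => h n (by omega)
  have hP : (∏ i ∈ range K, a₂ i) ^ 2 ≠ 0 := pow_ne_zero _ (prod_pos fun i _ => ha₂ i).ne'
  have hb : b₁ K = b₂ K := by
    have hodd := moment_sub_moment_odd (fun i hi => (hlow i hi).1) (fun i hi => (hlow i hi).2)
    rw [h _ (by omega), sub_self, eq_comm, mul_eq_zero, sub_eq_zero] at hodd
    exact hodd.resolve_right hP
  have heven := moment_sub_moment_even (fun i hi => (hlow i hi).1)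
    fun i hi => hi.lt_or_eq.elim (fun hi => (hlow i hi).2) fun hi => hi ▸ hb
  rw [h _ le_rfl, sub_self, eq_comm, mul_eq_zero, sub_eq_zero,
    pow_left_inj₀ (ha₁ K).le (ha₂ K).le two_ne_zero] at heven
  exact ⟨heven.resolve_right hP, hb⟩

end Jacobi

section Resolvent

variable {𝕜 E : Type*}

theorem eq_neg_sum_add_of_sub_smul_one_mul_eq_one [Field 𝕜] [Ring E] [Algebra 𝕜 E] {A R : E} {z : 𝕜} (hR : (A - z • 1) * R = 1) (hz : z ≠ 0) (M : ℕ) :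
    R = -∑ i ∈ range M, z⁻¹ ^ (i + 1) • A ^ i + z⁻¹ ^ M • (A ^ M * R) := by
  induction M with
  | zero => simp
  | succ M ih =>
    have hAR : A * R - 1 = z • R := by
      rw [← hR, sub_mul, smul_mul_assoc, one_mul, sub_sub_cancel]
    have hstep : z • (A ^ M * R) = A ^ (M + 1) * R - A ^ M := by
      rw [pow_succ, mul_assoc, ← mul_sub_one, hAR, mul_smul_comm]
    have hscale : z⁻¹ ^ M • (A ^ M * R) = z⁻¹ ^ (M + 1) • (z • (A ^ M * R)) := by
      rw [smul_smul, pow_succ, mul_assoc, inv_mul_cancel₀ hz, mul_one]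
    conv_lhs => rw [ih]
    rw [sum_range_succ, hscale, hstep, smul_sub]
    abel

section Normed

variable [NontriviallyNormedField 𝕜] [NormedAddCommGroup E] [NormedSpace 𝕜 E]

theorem norm_le_of_sub_smul_one_mul_eq_one {A R : E →L[𝕜] E} {z : 𝕜}
    (hR : (A - z • 1) * R = 1) (hz : ‖A‖ < ‖z‖) : ‖R‖ ≤ (‖z‖ - ‖A‖)⁻¹ := by
  have hzR : z • R = A * R - 1 := by
    rw [← hR, sub_mul, smul_mul_assoc, one_mul, sub_sub_cancel]
  have : ‖z‖ * ‖R‖ ≤ ‖A‖ * ‖R‖ + 1 := by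
    rw [← norm_smul, hzR]
    exact (norm_sub_le _ _).trans (add_le_add (norm_mul_le _ _) ContinuousLinearMap.norm_id_le)
  rw [← one_div, le_div_iff₀ (sub_pos.2 hz)]
  linarith

theorem norm_pow_apply_le (A : E →L[𝕜] E) (M : ℕ) (w : E) : ‖(A ^ M) w‖ ≤ ‖A‖ ^ M * ‖w‖ := by
  induction M with
  | zero => simp
  | succ M ih =>
    rw [pow_succ', mul_apply_eq_comp, pow_succ', mul_assoc]
    exact (A.le_opNorm _).trans (mul_le_mul_of_nonneg_left ih (norm_nonneg A))

end Normed

variable [RCLike 𝕜] [NormedAddCommGroup E] [InnerProductSpace 𝕜 E]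

theorem norm_inner_add_sum_inner_pow_le {A R : E →L[𝕜] E} {z : 𝕜} (hR : (A - z • 1) * R = 1)
    (hz : 2 * ‖A‖ < ‖z‖) (v : E) (M : ℕ) :
    ‖⟪v, R v⟫_𝕜 + ∑ i ∈ range M, ⟪v, (A ^ i) v⟫_𝕜 * z⁻¹ ^ (i + 1)‖ ≤
      2 * ‖A‖ ^ M * ‖v‖ ^ 2 * ‖z⁻¹ ^ (M + 1)‖ := by
  have hA : ‖A‖ < ‖z‖ := by linarith [norm_nonneg A]
  have hz0 : 0 < ‖z‖ := (norm_nonneg A).trans_lt hA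
  have hRz : ‖R‖ ≤ 2 * ‖z‖⁻¹ := by
    refine (norm_le_of_sub_smul_one_mul_eq_one hR hA).trans ?_
    rw [← div_eq_mul_inv, inv_eq_one_div, div_le_div_iff₀ (sub_pos.2 hA) hz0]
    linarith
  have hexp := congrArg (fun T => ⟪v, T v⟫_𝕜)
    (eq_neg_sum_add_of_sub_smul_one_mul_eq_one hR (norm_pos_iff.1 hz0) M)
  simp only [add_apply, neg_apply, _root_.sum_apply, smul_apply, mul_apply_eq_comp,
    inner_add_right, inner_neg_right, inner_sum, inner_smul_right] at hexp
  have hremainder : ⟪v, R v⟫_𝕜 + ∑ i ∈ range M, ⟪v, (A ^ i) v⟫_𝕜 * z⁻¹ ^ (i + 1) =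
      z⁻¹ ^ M * ⟪v, (A ^ M) (R v)⟫_𝕜 := by
    rw [hexp, sum_congr rfl fun i _ => mul_comm (z⁻¹ ^ (i + 1)) _]
    ring
  rw [hremainder, norm_mul, norm_pow, norm_pow, pow_succ, norm_inv]
  calc ‖z‖⁻¹ ^ M * ‖⟪v, (A ^ M) (R v)⟫_𝕜‖
      ≤ ‖z‖⁻¹ ^ M * (‖v‖ * (‖A‖ ^ M * (‖R‖ * ‖v‖))) := by
        gcongr
        exact (norm_inner_le_norm _ _).trans (mul_le_mul_of_nonneg_left
          ((norm_pow_apply_le A M _).trans (by gcongr; exact R.le_opNorm v)) (norm_nonneg v))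
    _ ≤ ‖z‖⁻¹ ^ M * (‖v‖ * (‖A‖ ^ M * (2 * ‖z‖⁻¹ * ‖v‖))) := by gcongr
    _ = 2 * ‖A‖ ^ M * ‖v‖ ^ 2 * (‖z‖⁻¹ ^ M * ‖z‖⁻¹) := by ring

theorem isBigO_inner_resolvent_expansion {A : E →L[𝕜] E} {v : E} {m : 𝕜 → 𝕜} {l : Filter 𝕜}
    (hl : l ≤ cobounded 𝕜)
    (hm : ∀ᶠ z in l, ∃ R : E →L[𝕜] E, (A - z • 1) * R = 1 ∧ m z = ⟪v, R v⟫_𝕜) (M : ℕ) :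
    (fun z => m z + ∑ i ∈ range M, ⟪v, (A ^ i) v⟫_𝕜 * z⁻¹ ^ (i + 1)) =O[l]
      fun z => z⁻¹ ^ (M + 1) := by
  refine IsBigO.of_bound (2 * ‖A‖ ^ M * ‖v‖ ^ 2) ?_
  filter_upwards [hm, (tendsto_norm_cobounded_atTop.eventually_gt_atTop (2 * ‖A‖)).filter_mono hl]
    with z ⟨R, hR, hmz⟩ hz
  rw [hmz]
  exact norm_inner_add_sum_inner_pow_le hR hz v M

end Resolvent

section Expansion

variable {𝕜 : Type*} [NormedField 𝕜] {l : Filter 𝕜}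

theorem isBigO_inv_pow_of_norm_le_rpow {F : Type*} [Norm F] {f : 𝕜 → F}
    (hl : l ≤ cobounded 𝕜) {C R₀ : ℝ} {N : ℕ}
    (h : ∀ᶠ z in l, R₀ ≤ ‖z‖ → ‖f z‖ ≤ C * ‖z‖ ^ (-(N : ℝ))) :
    f =O[l] fun z => z⁻¹ ^ N := by
  refine IsBigO.of_bound C ?_
  filter_upwards [h, (tendsto_norm_cobounded_atTop.eventually_ge_atTop R₀).filter_mono hl]
    with z hz hR
  rw [norm_pow, norm_inv, inv_pow, ← Real.rpow_natCast, ← Real.rpow_neg (norm_nonneg z)]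
  exact hz hR

theorem coeff_eq_of_isBigO_expansions [l.NeBot] (hl : l ≤ cobounded 𝕜) {f₁ f₂ : 𝕜 → 𝕜}
    {μ₁ μ₂ : ℕ → 𝕜}
    (h₁ : ∀ M, (fun z => f₁ z + ∑ i ∈ range M, μ₁ i * z⁻¹ ^ (i + 1)) =O[l] fun z => z⁻¹ ^ (M + 1))
    (h₂ : ∀ M, (fun z => f₂ z + ∑ i ∈ range M, μ₂ i * z⁻¹ ^ (i + 1)) =O[l] fun z => z⁻¹ ^ (M + 1))
    {N : ℕ} (h : (fun z => f₁ z - f₂ z) =O[l] fun z => z⁻¹ ^ N) {n : ℕ} (hn : n + 2 ≤ N) :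
    μ₁ n = μ₂ n := by
  have hpow : ∀ {p q : ℕ}, p < q → (fun z : 𝕜 => z⁻¹ ^ q) =o[l] fun z => z⁻¹ ^ p :=
    fun hpq => (isLittleO_pow_pow hpq).comp_tendsto (tendsto_inv₀_cobounded.mono_left hl)
  induction n using Nat.strong_induction_on with
  | _ n ih =>
  have hlow : ∀ z, ∑ i ∈ range n, μ₁ i * z⁻¹ ^ (i + 1) = ∑ i ∈ range n, μ₂ i * z⁻¹ ^ (i + 1) :=
    fun z => sum_congr rfl fun i hi => by
      have hi := mem_range.1 hi
      rw [ih i hi (by omega)]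
  have hdiff : (fun z => (μ₁ n - μ₂ n) * z⁻¹ ^ (n + 1)) = fun z =>
      (f₁ z + ∑ i ∈ range (n + 1), μ₁ i * z⁻¹ ^ (i + 1)) -
        (f₂ z + ∑ i ∈ range (n + 1), μ₂ i * z⁻¹ ^ (i + 1)) - (f₁ z - f₂ z) := by
    funext z
    rw [sum_range_succ, sum_range_succ, hlow]
    ring
  have hsmall : (fun z => (μ₁ n - μ₂ n) * z⁻¹ ^ (n + 1)) =o[l] fun z => z⁻¹ ^ (n + 1) := by
    rw [hdiff]
    exact (((h₁ _).sub (h₂ _)).trans_isLittleO (hpow (by omega))).sub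
      (h.trans_isLittleO (hpow (by omega)))
  by_contra hne
  refine isLittleO_irrefl ?_ ((isLittleO_const_mul_left_iff (sub_ne_zero.2 hne)).1 hsmall)
  exact ((eventually_ne_cobounded 0).filter_mono hl |>.mono fun z hz =>
    pow_ne_zero _ (inv_ne_zero hz)).frequently

end Expansion

theorem neBot_cobounded_inf_im_ne_zero : (cobounded ℂ ⊓ 𝓟 {z : ℂ | z.im ≠ 0}).NeBot := by
  rw [inf_principal_neBot_iff]
  intro U hU
  obtain ⟨r, -, hr⟩ := (Metric.hasBasis_cobounded_compl_closedBall (0 : ℂ)).mem_iff.1 hU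
  refine ⟨(|r| + 1 : ℝ) * Complex.I, hr ?_, ?_⟩
  · simp only [Set.mem_compl_iff, Metric.mem_closedBall, dist_zero_right, norm_mul,
      Complex.norm_I, mul_one, Complex.norm_real, Real.norm_eq_abs, not_le]
    rw [abs_of_pos (by positivity)]
    linarith [le_abs_self r]
  · simp
    positivity

namespace Jacobi

theorem coe_pow_apply_single {A : lp (fun _ : ℕ => ℂ) 2 →L[ℂ] lp (fun _ : ℕ => ℂ) 2}
    {a b : ℕ → ℝ}
    (hA : ∀ u k, (A u : ℕ → ℂ) k = op (fun i => (a i : ℂ)) (fun i => (b i : ℂ)) u k)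
    (n : ℕ) : ⇑((A ^ n) (lp.single 2 0 1)) = fun k => ((powDelta a b n k : ℝ) : ℂ) := by
  induction n with
  | zero =>
    funext k
    by_cases hk : k = 0 <;> simp [powDelta_zero, hk]
  | succ n ih =>
    funext k
    rw [pow_succ', mul_apply_eq_comp, hA, ih, powDelta_succ]
    exact map_op Complex.ofRealHom _ k

theorem inner_single_pow_single {A : lp (fun _ : ℕ => ℂ) 2 →L[ℂ] lp (fun _ : ℕ => ℂ) 2}
    {a b : ℕ → ℝ}
    (hA : ∀ u k, (A u : ℕ → ℂ) k = op (fun i => (a i : ℂ)) (fun i => (b i : ℂ)) u k)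
    (n : ℕ) :
    ⟪lp.single 2 0 (1 : ℂ), (A ^ n) (lp.single 2 0 1)⟫_ℂ = ((moment a b n : ℝ) : ℂ) := by
  rw [lp.inner_single_left, coe_pow_apply_single hA]
  simp [moment]

end Jacobi

theorem jacobi_m_function_local_uniqueness_general
    (a₁ a₂ b₁ b₂ : ℕ → ℝ)
    (ha₁ : ∀ k, 0 < a₁ k) (ha₂ : ∀ k, 0 < a₂ k)
    (A₁ A₂ : lp (fun _ : ℕ => ℂ) 2 →L[ℂ] lp (fun _ : ℕ => ℂ) 2)
    (hA₁ : ∀ (u : lp (fun _ : ℕ => ℂ) 2) (k : ℕ),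
      (A₁ u : ∀ _ : ℕ, ℂ) k = (if k = 0 then 0 else (a₁ (k-1) : ℂ) * (u : ∀ _ : ℕ, ℂ) (k-1))
        + (b₁ k : ℂ) * (u : ∀ _ : ℕ, ℂ) k + (a₁ k : ℂ) * (u : ∀ _ : ℕ, ℂ) (k+1))
    (hA₂ : ∀ (u : lp (fun _ : ℕ => ℂ) 2) (k : ℕ),
      (A₂ u : ∀ _ : ℕ, ℂ) k = (if k = 0 then 0 else (a₂ (k-1) : ℂ) * (u : ∀ _ : ℕ, ℂ) (k-1))
        + (b₂ k : ℂ) * (u : ∀ _ : ℕ, ℂ) k + (a₂ k : ℂ) * (u : ∀ _ : ℕ, ℂ) (k+1))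
    (δ₀ : lp (fun _ : ℕ => ℂ) 2) (hδ₀ : δ₀ = lp.single 2 0 1)
    (m₁ m₂ : ℂ → ℂ)
    (hm₁ : ∀ z : ℂ, z.im ≠ 0 → ∃ R : lp (fun _ : ℕ => ℂ) 2 →L[ℂ] lp (fun _ : ℕ => ℂ) 2,
      (A₁ - z • 1) * R = 1 ∧ R * (A₁ - z • 1) = 1 ∧
        m₁ z = inner (𝕜 := ℂ) δ₀ (R δ₀))
    (hm₂ : ∀ z : ℂ, z.im ≠ 0 → ∃ R : lp (fun _ : ℕ => ℂ) 2 →L[ℂ] lp (fun _ : ℕ => ℂ) 2,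
      (A₂ - z • 1) * R = 1 ∧ R * (A₂ - z • 1) = 1 ∧
        m₂ z = inner (𝕜 := ℂ) δ₀ (R δ₀))
    (N : ℕ)
    (hO : ∃ C > (0:ℝ), ∃ R₀ : ℝ, ∀ z : ℂ, z.im ≠ 0 → ‖z‖ ≥ R₀ →
      ‖m₁ z - m₂ z‖ ≤ C * ‖z‖ ^ (-(N:ℝ))) :
    ∀ k : ℕ, 2 * k + 4 ≤ N → a₁ k = a₂ k ∧ b₁ k = b₂ k := by
  intro k hk
  obtain ⟨C, -, R₀, hmO⟩ := hO
  have := neBot_cobounded_inf_im_ne_zero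
  have hl : cobounded ℂ ⊓ 𝓟 {z : ℂ | z.im ≠ 0} ≤ cobounded ℂ := inf_le_left
  refine Jacobi.params_eq_of_moment_eq ha₁ ha₂ fun n hn => ?_
  have hμ : ⟪δ₀, (A₁ ^ n) δ₀⟫_ℂ = ⟪δ₀, (A₂ ^ n) δ₀⟫_ℂ := coeff_eq_of_isBigO_expansions hl
    (isBigO_inner_resolvent_expansion hl (eventually_inf_principal.2 (.of_forall fun z hz =>
      (hm₁ z hz).imp fun _ hR => ⟨hR.1, hR.2.2⟩)))
    (isBigO_inner_resolvent_expansion hl (eventually_inf_principal.2 (.of_forall fun z hz =>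
      (hm₂ z hz).imp fun _ hR => ⟨hR.1, hR.2.2⟩)))
    (isBigO_inv_pow_of_norm_le_rpow hl (eventually_inf_principal.2 (.of_forall hmO))) (by omega)
  rwa [hδ₀, Jacobi.inner_single_pow_single hA₁, Jacobi.inner_single_pow_single hA₂,
    Complex.ofReal_inj] at hμ

/-- Local Borg–Marchenko for Jacobi matrices: if the `m`-functions of two bounded
self-adjoint Jacobi matrices satisfy `|m₁(z) − m₂(z)| = O(|z|^{−N})` for some even
`N ≥ 4`, then the entries agree for `0 ≤ k ≤ (N−4)/2`. -/
theorem jacobi_m_function_local_uniqueness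
    (a₁ a₂ b₁ b₂ : ℕ → ℝ)
    (ha₁ : ∀ k, 0 < a₁ k) (ha₂ : ∀ k, 0 < a₂ k)
    (A₁ A₂ : lp (fun _ : ℕ => ℂ) 2 →L[ℂ] lp (fun _ : ℕ => ℂ) 2)
    (hsa₁ : IsSelfAdjoint A₁) (hsa₂ : IsSelfAdjoint A₂)
    (hA₁ : ∀ (u : lp (fun _ : ℕ => ℂ) 2) (k : ℕ),
      (A₁ u : ∀ _ : ℕ, ℂ) k = (if k = 0 then 0 else (a₁ (k-1) : ℂ) * (u : ∀ _ : ℕ, ℂ) (k-1))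
        + (b₁ k : ℂ) * (u : ∀ _ : ℕ, ℂ) k + (a₁ k : ℂ) * (u : ∀ _ : ℕ, ℂ) (k+1))
    (hA₂ : ∀ (u : lp (fun _ : ℕ => ℂ) 2) (k : ℕ),
      (A₂ u : ∀ _ : ℕ, ℂ) k = (if k = 0 then 0 else (a₂ (k-1) : ℂ) * (u : ∀ _ : ℕ, ℂ) (k-1))
        + (b₂ k : ℂ) * (u : ∀ _ : ℕ, ℂ) k + (a₂ k : ℂ) * (u : ∀ _ : ℕ, ℂ) (k+1))
    (δ₀ : lp (fun _ : ℕ => ℂ) 2) (hδ₀ : δ₀ = lp.single 2 0 1)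
    (m₁ m₂ : ℂ → ℂ)
    (hm₁ : ∀ z : ℂ, z.im ≠ 0 → ∃ R : lp (fun _ : ℕ => ℂ) 2 →L[ℂ] lp (fun _ : ℕ => ℂ) 2,
      (A₁ - z • 1) * R = 1 ∧ R * (A₁ - z • 1) = 1 ∧
        m₁ z = inner (𝕜 := ℂ) δ₀ (R δ₀))
    (hm₂ : ∀ z : ℂ, z.im ≠ 0 → ∃ R : lp (fun _ : ℕ => ℂ) 2 →L[ℂ] lp (fun _ : ℕ => ℂ) 2,
      (A₂ - z • 1) * R = 1 ∧ R * (A₂ - z • 1) = 1 ∧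
        m₂ z = inner (𝕜 := ℂ) δ₀ (R δ₀))
    (N : ℕ) (hN : 4 ≤ N) (hNeven : Even N)
    (hO : ∃ C > (0:ℝ), ∃ R₀ : ℝ, ∀ z : ℂ, z.im ≠ 0 → ‖z‖ ≥ R₀ →
      ‖m₁ z - m₂ z‖ ≤ C * ‖z‖ ^ (-(N:ℝ))) :
    ∀ k : ℕ, 2 * k + 4 ≤ N → a₁ k = a₂ k ∧ b₁ k = b₂ k :=
  jacobi_m_function_local_uniqueness_general a₁ a₂ b₁ b₂ ha₁ ha₂ A₁ A₂ hA₁ hA₂ δ₀ hδ₀ m₁ m₂ hm₁ hm₂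
    N hO
end

section
/- Let m₊, m₋ be the half-line m-functions and define the 2×2 Weyl matrix 𝓜(z) = (m₋(z) − m₊(z))^{−1} · [[1, (m₋(z)+m₊(z))/2], [(m₋(z)+m₊(z))/2, m₋(z)m₊(z)]]. If 𝓜₁, 𝓜₂ are two such matrices built from m_{1,±}, m_{2,±} satisfying m_{j,±}(z) = ±i√z + o(√z) along a ray, and ‖𝓜₁(z) − 𝓜₂(z)‖ = O(e^{−2 Im(√z) a}) along that ray, then |m_{1,+}(z) − m_{2,+}(z)| = O(|z| e^{−2 Im(√z) a}) and |m_{1,−}(z) − m_{2,−}(z)| = O(|z| e^{−2 Im(√z) a}) along the same ray. -/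
open Complex Real Matrix

attribute [local instance] Matrix.normedAddCommGroup

/-!
Write `D = m₋ − m₊` and `S = m₋ + m₊`. The first row of the Weyl matrix is `(1/D, S/(2D))`, and
from two such rows one recovers `D₁ − D₂ = −D₁ D₂ (1/D₁ − 1/D₂)` and
`S₁ − S₂ = 2 D₁ (S₁/(2D₁) − S₂/(2D₂)) − S₂ D₁ (1/D₁ − 1/D₂)`.
Along the ray the asymptotics give `|D_j| ≤ 3|√z|` and `|S_j| ≤ |√z|`, so the differences of
`m_± = (S ∓ D)/2` are at most a constant times `|√z|² = |z|` times `‖𝓜₁ − 𝓜₂‖`.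
-/

noncomputable def weylMatrix (mm mp : ℂ) : Matrix (Fin 2) (Fin 2) ℂ :=
  (mm - mp)⁻¹ • !![1, (mm + mp) / 2; (mm + mp) / 2, mm * mp]

section WeylMatrix

variable {m₁ p₁ m₂ p₂ : ℂ}

@[simp]
theorem weylMatrix_apply_zero_zero (mm mp : ℂ) : weylMatrix mm mp 0 0 = (mm - mp)⁻¹ := by
  simp [weylMatrix]

@[simp]
theorem weylMatrix_apply_zero_one (mm mp : ℂ) :
    weylMatrix mm mp 0 1 = (mm - mp)⁻¹ * ((mm + mp) / 2) := by
  simp [weylMatrix]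

theorem sub_sub_sub_eq_of_weylMatrix (h₁ : m₁ - p₁ ≠ 0) (h₂ : m₂ - p₂ ≠ 0) :
    (m₁ - p₁) - (m₂ - p₂) =
      -((m₁ - p₁) * (m₂ - p₂) * (weylMatrix m₁ p₁ - weylMatrix m₂ p₂) 0 0) := by
  simp only [Matrix.sub_apply, weylMatrix_apply_zero_zero]
  field_simp
  ring

theorem add_sub_add_eq_of_weylMatrix (h₁ : m₁ - p₁ ≠ 0) (h₂ : m₂ - p₂ ≠ 0) :
    (m₁ + p₁) - (m₂ + p₂) =
      2 * (m₁ - p₁) * (weylMatrix m₁ p₁ - weylMatrix m₂ p₂) 0 1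
        - (m₂ + p₂) * (m₁ - p₁) * (weylMatrix m₁ p₁ - weylMatrix m₂ p₂) 0 0 := by
  simp only [Matrix.sub_apply, weylMatrix_apply_zero_zero, weylMatrix_apply_zero_one]
  field_simp
  ring

theorem norm_sub_sub_sub_le_of_weylMatrix (h₁ : m₁ - p₁ ≠ 0) (h₂ : m₂ - p₂ ≠ 0) :
    ‖(m₁ - p₁) - (m₂ - p₂)‖ ≤
      ‖m₁ - p₁‖ * ‖m₂ - p₂‖ * ‖weylMatrix m₁ p₁ - weylMatrix m₂ p₂‖ := by
  rw [sub_sub_sub_eq_of_weylMatrix h₁ h₂, norm_neg, norm_mul, norm_mul]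
  gcongr
  exact Matrix.norm_entry_le_entrywise_sup_norm _

theorem norm_add_sub_add_le_of_weylMatrix (h₁ : m₁ - p₁ ≠ 0) (h₂ : m₂ - p₂ ≠ 0) :
    ‖(m₁ + p₁) - (m₂ + p₂)‖ ≤
      ‖m₁ - p₁‖ * (2 + ‖m₂ + p₂‖) * ‖weylMatrix m₁ p₁ - weylMatrix m₂ p₂‖ := by
  set Δ := weylMatrix m₁ p₁ - weylMatrix m₂ p₂
  have h₀₀ : ‖Δ 0 0‖ ≤ ‖Δ‖ := Matrix.norm_entry_le_entrywise_sup_norm _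
  have h₀₁ : ‖Δ 0 1‖ ≤ ‖Δ‖ := Matrix.norm_entry_le_entrywise_sup_norm _
  rw [add_sub_add_eq_of_weylMatrix h₁ h₂]
  calc _ ≤ ‖2 * (m₁ - p₁) * Δ 0 1‖ + ‖(m₂ + p₂) * (m₁ - p₁) * Δ 0 0‖ := norm_sub_le _ _
    _ = 2 * ‖m₁ - p₁‖ * ‖Δ 0 1‖ + ‖m₂ + p₂‖ * ‖m₁ - p₁‖ * ‖Δ 0 0‖ := by
      simp only [norm_mul, Complex.norm_ofNat]
    _ ≤ 2 * ‖m₁ - p₁‖ * ‖Δ‖ + ‖m₂ + p₂‖ * ‖m₁ - p₁‖ * ‖Δ‖ := by gcongr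
    _ = _ := by ring

theorem norm_half_sub_le {x y : ℂ} {a b : ℝ} (hx : ‖x‖ ≤ a) (hy : ‖y‖ ≤ b) :
    ‖(x - y) / 2‖ ≤ (a + b) / 2 := by
  rw [norm_div, Complex.norm_ofNat]
  gcongr
  exact (norm_sub_le x y).trans (add_le_add hx hy)

theorem norm_half_add_le {x y : ℂ} {a b : ℝ} (hx : ‖x‖ ≤ a) (hy : ‖y‖ ≤ b) :
    ‖(x + y) / 2‖ ≤ (a + b) / 2 := by
  simpa using norm_half_sub_le hx (y := -y) (by rwa [norm_neg])

theorem norm_sub_le_of_weylMatrix (h₁ : m₁ - p₁ ≠ 0) (h₂ : m₂ - p₂ ≠ 0) :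
    ‖p₁ - p₂‖ ≤ ‖m₁ - p₁‖ * (2 + ‖m₂ + p₂‖ + ‖m₂ - p₂‖) / 2 *
        ‖weylMatrix m₁ p₁ - weylMatrix m₂ p₂‖ ∧
      ‖m₁ - m₂‖ ≤ ‖m₁ - p₁‖ * (2 + ‖m₂ + p₂‖ + ‖m₂ - p₂‖) / 2 *
        ‖weylMatrix m₁ p₁ - weylMatrix m₂ p₂‖ := by
  have hS := norm_add_sub_add_le_of_weylMatrix h₁ h₂
  have hD := norm_sub_sub_sub_le_of_weylMatrix h₁ h₂
  constructor
  · calc ‖p₁ - p₂‖ = ‖((m₁ + p₁) - (m₂ + p₂) - ((m₁ - p₁) - (m₂ - p₂))) / 2‖ := by ring_nf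
      _ ≤ _ := (norm_half_sub_le hS hD).trans_eq (by ring)
  · calc ‖m₁ - m₂‖ = ‖((m₁ + p₁) - (m₂ + p₂) + ((m₁ - p₁) - (m₂ - p₂))) / 2‖ := by ring_nf
      _ ≤ _ := (norm_half_add_le hS hD).trans_eq (by ring)

end WeylMatrix

section Asymptotics

variable {m p w : ℂ} {δ : ℝ}

theorem norm_sub_le_of_near_I_mul (hm : ‖m + I * w‖ ≤ δ * ‖w‖) (hp : ‖p - I * w‖ ≤ δ * ‖w‖) :
    ‖m - p‖ ≤ (2 + 2 * δ) * ‖w‖ := by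
  calc ‖m - p‖ = ‖(m + I * w) - (p - I * w) - 2 * (I * w)‖ := by ring_nf
    _ ≤ ‖m + I * w‖ + ‖p - I * w‖ + ‖2 * (I * w)‖ := norm_sub_le_of_le (norm_sub_le _ _) le_rfl
    _ ≤ δ * ‖w‖ + δ * ‖w‖ + 2 * ‖w‖ := by
      rw [norm_mul, norm_mul, Complex.norm_I, Complex.norm_ofNat, one_mul]
      gcongr
    _ = (2 + 2 * δ) * ‖w‖ := by ring

theorem norm_add_le_of_near_I_mul (hm : ‖m + I * w‖ ≤ δ * ‖w‖) (hp : ‖p - I * w‖ ≤ δ * ‖w‖) :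
    ‖m + p‖ ≤ 2 * δ * ‖w‖ := by
  calc ‖m + p‖ = ‖(m + I * w) + (p - I * w)‖ := by ring_nf
    _ ≤ δ * ‖w‖ + δ * ‖w‖ := norm_add_le_of_le hm hp
    _ = 2 * δ * ‖w‖ := by ring

end Asymptotics

theorem norm_sub_le_of_weylMatrix_of_near_I_mul {m₁ p₁ m₂ p₂ w : ℂ} (hw : 1 ≤ ‖w‖)
    (h₁ : m₁ - p₁ ≠ 0) (h₂ : m₂ - p₂ ≠ 0)
    (hp₁ : ‖p₁ - I * w‖ ≤ 1 / 2 * ‖w‖) (hp₂ : ‖p₂ - I * w‖ ≤ 1 / 2 * ‖w‖)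
    (hm₁ : ‖m₁ + I * w‖ ≤ 1 / 2 * ‖w‖) (hm₂ : ‖m₂ + I * w‖ ≤ 1 / 2 * ‖w‖) :
    ‖p₁ - p₂‖ ≤ 9 * ‖w‖ ^ 2 * ‖weylMatrix m₁ p₁ - weylMatrix m₂ p₂‖ ∧
      ‖m₁ - m₂‖ ≤ 9 * ‖w‖ ^ 2 * ‖weylMatrix m₁ p₁ - weylMatrix m₂ p₂‖ := by
  have hD₁ := norm_sub_le_of_near_I_mul hm₁ hp₁
  have hD₂ := norm_sub_le_of_near_I_mul hm₂ hp₂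
  have hS₂ := norm_add_le_of_near_I_mul hm₂ hp₂
  have hK : ‖m₁ - p₁‖ * (2 + ‖m₂ + p₂‖ + ‖m₂ - p₂‖) / 2 ≤ 9 * ‖w‖ ^ 2 :=
    calc _ ≤ (2 + 2 * (1 / 2)) * ‖w‖ * (2 + 2 * (1 / 2) * ‖w‖ + (2 + 2 * (1 / 2)) * ‖w‖) / 2 := by
          gcongr
      _ ≤ 9 * ‖w‖ ^ 2 := by nlinarith
  obtain ⟨hp, hm⟩ := norm_sub_le_of_weylMatrix h₁ h₂
  exact ⟨hp.trans (by gcongr), hm.trans (by gcongr)⟩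

theorem im_ofReal_mul_exp_I_mul_pi_sub (r ε : ℝ) :
    ((r : ℂ) * Complex.exp (I * (π - ε))).im = r * Real.sin ε := by
  rw [show I * ((π : ℂ) - ε) = ((π - ε : ℝ) : ℂ) * I by push_cast; ring,
    Complex.im_ofReal_mul, Complex.exp_ofReal_mul_I_im, Real.sin_pi_sub]

theorem norm_ofReal_mul_exp_I_mul_pi_sub {r : ℝ} (hr : 0 ≤ r) (ε : ℝ) :
    ‖(r : ℂ) * Complex.exp (I * (π - ε))‖ = r := by
  rw [show I * ((π : ℂ) - ε) = ((π - ε : ℝ) : ℂ) * I by push_cast; ring,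
    norm_mul, Complex.norm_exp_ofReal_mul_I, Complex.norm_of_nonneg hr, mul_one]

theorem full_line_weyl_matrix_comparison_general
    (a : ℝ) (ε : ℝ) (hε : 0 < ε) (hε' : ε < π / 2)
    (mp₁ mp₂ mm₁ mm₂ : ℂ → ℂ) (s : ℝ → ℂ)
    (hs : ∀ r > (0:ℝ), (s r) ^ 2 = (r : ℂ) * Complex.exp (I * (π - ε)) ∧ 0 < (s r).im)
    (hne₁ : ∀ z : ℂ, z.im ≠ 0 → mm₁ z - mp₁ z ≠ 0)
    (hne₂ : ∀ z : ℂ, z.im ≠ 0 → mm₂ z - mp₂ z ≠ 0)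
    (M₁ M₂ : ℂ → Matrix (Fin 2) (Fin 2) ℂ)
    (hM₁ : ∀ z : ℂ, z.im ≠ 0 → M₁ z = (mm₁ z - mp₁ z)⁻¹ •
      !![1, (mm₁ z + mp₁ z)/2; (mm₁ z + mp₁ z)/2, mm₁ z * mp₁ z])
    (hM₂ : ∀ z : ℂ, z.im ≠ 0 → M₂ z = (mm₂ z - mp₂ z)⁻¹ •
      !![1, (mm₂ z + mp₂ z)/2; (mm₂ z + mp₂ z)/2, mm₂ z * mp₂ z])
    (hasym : ∀ δ > (0:ℝ), ∃ r₁ : ℝ, ∀ r ≥ r₁, r > 0 →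
      ‖mp₁ ((r : ℂ) * Complex.exp (I * (π - ε))) - I * s r‖ ≤ δ * ‖s r‖ ∧
      ‖mp₂ ((r : ℂ) * Complex.exp (I * (π - ε))) - I * s r‖ ≤ δ * ‖s r‖ ∧
      ‖mm₁ ((r : ℂ) * Complex.exp (I * (π - ε))) + I * s r‖ ≤ δ * ‖s r‖ ∧
      ‖mm₂ ((r : ℂ) * Complex.exp (I * (π - ε))) + I * s r‖ ≤ δ * ‖s r‖)
    (hO : ∃ C > (0:ℝ), ∃ r₂ : ℝ, ∀ r ≥ r₂, r > 0 →
      ‖M₁ ((r : ℂ) * Complex.exp (I * (π - ε)))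
        - M₂ ((r : ℂ) * Complex.exp (I * (π - ε)))‖
        ≤ C * Real.exp (-2 * (s r).im * a)) :
    ∃ C > (0:ℝ), ∃ r₀ : ℝ, ∀ r ≥ r₀, r > 0 →
      ‖mp₁ ((r : ℂ) * Complex.exp (I * (π - ε)))
        - mp₂ ((r : ℂ) * Complex.exp (I * (π - ε)))‖
        ≤ C * r * Real.exp (-2 * (s r).im * a) ∧
      ‖mm₁ ((r : ℂ) * Complex.exp (I * (π - ε)))
        - mm₂ ((r : ℂ) * Complex.exp (I * (π - ε)))‖
        ≤ C * r * Real.exp (-2 * (s r).im * a) := by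
  obtain ⟨C, hC, r₂, hM⟩ := hO
  obtain ⟨r₁, hnear⟩ := hasym (1 / 2) one_half_pos
  refine ⟨9 * C, by positivity, max (max r₁ r₂) 1, fun r hr hr₀ => ?_⟩
  simp only [ge_iff_le, max_le_iff] at hr
  set z := (r : ℂ) * Complex.exp (I * (π - ε))
  have hz : z.im ≠ 0 := by
    rw [im_ofReal_mul_exp_I_mul_pi_sub]
    exact (mul_pos hr₀ (Real.sin_pos_of_pos_of_lt_pi hε (by linarith [Real.pi_pos]))).ne'
  have hsr : ‖s r‖ ^ 2 = r := by
    rw [← norm_pow, (hs r hr₀).1, norm_ofReal_mul_exp_I_mul_pi_sub hr₀.le]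
  have hs₁ : 1 ≤ ‖s r‖ := by nlinarith [norm_nonneg (s r)]
  have hΔ : ‖weylMatrix (mm₁ z) (mp₁ z) - weylMatrix (mm₂ z) (mp₂ z)‖
      ≤ C * Real.exp (-2 * (s r).im * a) := by
    rw [weylMatrix, weylMatrix, ← hM₁ z hz, ← hM₂ z hz]
    exact hM r hr.1.2 hr₀
  obtain ⟨hp₁, hp₂, hm₁, hm₂⟩ := hnear r hr.1.1 hr₀
  obtain ⟨hp, hm⟩ := norm_sub_le_of_weylMatrix_of_near_I_mul hs₁ (hne₁ z hz) (hne₂ z hz)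
    hp₁ hp₂ hm₁ hm₂
  have hbound : 9 * ‖s r‖ ^ 2 * ‖weylMatrix (mm₁ z) (mp₁ z) - weylMatrix (mm₂ z) (mp₂ z)‖
      ≤ 9 * C * r * Real.exp (-2 * (s r).im * a) := by
    rw [hsr]
    exact (mul_le_mul_of_nonneg_left hΔ (by positivity)).trans_eq (by ring)
  exact ⟨hp.trans hbound, hm.trans hbound⟩

/-- If the `2×2` Weyl matrices `𝓜_j` built from half-line `m`-functions `m_{j,±}`
(with `m_{j,±}(z) = ±i√z + o(√z)` along the ray `arg z = π − ε`) are exponentially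
close, `‖𝓜₁(z) − 𝓜₂(z)‖ = O(e^{−2 Im(√z) a})`, then both
`|m_{j,+}` and `m_{j,-}` differences are `O(|z| e^{−2 Im(√z) a})` along the ray. -/
theorem full_line_weyl_matrix_comparison
    (a : ℝ) (ha : 0 < a) (ε : ℝ) (hε : 0 < ε) (hε' : ε < π / 2)
    (mp₁ mp₂ mm₁ mm₂ : ℂ → ℂ) (s : ℝ → ℂ)
    (hs : ∀ r > (0:ℝ), (s r) ^ 2 = (r : ℂ) * Complex.exp (I * (π - ε)) ∧ 0 < (s r).im)
    (hne₁ : ∀ z : ℂ, z.im ≠ 0 → mm₁ z - mp₁ z ≠ 0)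
    (hne₂ : ∀ z : ℂ, z.im ≠ 0 → mm₂ z - mp₂ z ≠ 0)
    (M₁ M₂ : ℂ → Matrix (Fin 2) (Fin 2) ℂ)
    (hM₁ : ∀ z : ℂ, z.im ≠ 0 → M₁ z = (mm₁ z - mp₁ z)⁻¹ •
      !![1, (mm₁ z + mp₁ z)/2; (mm₁ z + mp₁ z)/2, mm₁ z * mp₁ z])
    (hM₂ : ∀ z : ℂ, z.im ≠ 0 → M₂ z = (mm₂ z - mp₂ z)⁻¹ •
      !![1, (mm₂ z + mp₂ z)/2; (mm₂ z + mp₂ z)/2, mm₂ z * mp₂ z])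
    (hasym : ∀ δ > (0:ℝ), ∃ r₁ : ℝ, ∀ r ≥ r₁, r > 0 →
      ‖mp₁ ((r : ℂ) * Complex.exp (I * (π - ε))) - I * s r‖ ≤ δ * ‖s r‖ ∧
      ‖mp₂ ((r : ℂ) * Complex.exp (I * (π - ε))) - I * s r‖ ≤ δ * ‖s r‖ ∧
      ‖mm₁ ((r : ℂ) * Complex.exp (I * (π - ε))) + I * s r‖ ≤ δ * ‖s r‖ ∧
      ‖mm₂ ((r : ℂ) * Complex.exp (I * (π - ε))) + I * s r‖ ≤ δ * ‖s r‖)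
    (hO : ∃ C > (0:ℝ), ∃ r₂ : ℝ, ∀ r ≥ r₂, r > 0 →
      ‖M₁ ((r : ℂ) * Complex.exp (I * (π - ε)))
        - M₂ ((r : ℂ) * Complex.exp (I * (π - ε)))‖
        ≤ C * Real.exp (-2 * (s r).im * a)) :
    ∃ C > (0:ℝ), ∃ r₀ : ℝ, ∀ r ≥ r₀, r > 0 →
      ‖mp₁ ((r : ℂ) * Complex.exp (I * (π - ε)))
        - mp₂ ((r : ℂ) * Complex.exp (I * (π - ε)))‖
        ≤ C * r * Real.exp (-2 * (s r).im * a) ∧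
      ‖mm₁ ((r : ℂ) * Complex.exp (I * (π - ε)))
        - mm₂ ((r : ℂ) * Complex.exp (I * (π - ε)))‖
        ≤ C * r * Real.exp (-2 * (s r).im * a) :=
  full_line_weyl_matrix_comparison_general a ε hε hε' mp₁ mp₂ mm₁ mm₂ s hs hne₁ hne₂ M₁ M₂ hM₁ hM₂
    hasym hO
end
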